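/- arXiv:0907.1485 — 4 statements merged into one kernel-verified Lean document; each statement's English description precedes it below -/
import Mathlib

section
/- The Stirling number of the first kind s(m,r) equals the sum of the weights of all lattice paths from (0,0) to (r-1, m-r), where a path consists of north steps (0,1) and east steps (1,0), the weight of the i-th step of a path is -i if it is a north step and 1 if it is an east step, and the weight of a path is the product of the weights of its steps. -/
/-- `(i,j)` is a standard edge of the set partition `p` of `[n]`:
`i < j` lie in the same block with no block element strictly between them. -/
def stdEdge {n : ℕ} (p : Finpartition (Finset.Icc 1 n : Finset ℕ)) (i j : ℕ) : Prop :=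
  i < j ∧ ∃ B ∈ p.parts, i ∈ B ∧ j ∈ B ∧ ∀ t ∈ B, ¬ (i < t ∧ t < j)

/-- `(i,j)` is a front edge: `i < j` lie in the same block and `i` is the
minimum (head) of that block. -/
def frontEdge {n : ℕ} (p : Finpartition (Finset.Icc 1 n : Finset ℕ)) (i j : ℕ) : Prop :=
  i < j ∧ ∃ B ∈ p.parts, i ∈ B ∧ j ∈ B ∧ ∀ t ∈ B, i ≤ t

/-- `h` is a head of `p`, i.e. the minimum element of its block. -/
def isHead {n : ℕ} (p : Finpartition (Finset.Icc 1 n : Finset ℕ)) (h : ℕ) : Prop :=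
  ∃ B ∈ p.parts, h ∈ B ∧ ∀ t ∈ B, h ≤ t

/-- `p` has no `k`-distant crossing: no standard edges `(i1,j1)`, `(i2,j2)` with
`i1 < i2 < j1 < j2` and `j1 - i2 ≥ k`. -/
def kDistantNoncrossing {n : ℕ} (k : ℕ) (p : Finpartition (Finset.Icc 1 n : Finset ℕ)) : Prop :=
  ¬ ∃ i1 j1 i2 j2, stdEdge p i1 j1 ∧ stdEdge p i2 j2 ∧
    i1 < i2 ∧ i2 < j1 ∧ j1 < j2 ∧ k ≤ j1 - i2

/-- `p` has no `k`-front crossing: no front edges `(i1,j1)`, `(i2,j2)` with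
`i1 < i2 < j1 < j2` and at least `k - 2` heads strictly between `i2` and `j1`.
This is equivalent to `p` being `12⋯k12`-avoiding. -/
def kFrontNoncrossing {n : ℕ} (k : ℕ) (p : Finpartition (Finset.Icc 1 n : Finset ℕ)) : Prop :=
  ¬ ∃ i1 j1 i2 j2, frontEdge p i1 j1 ∧ frontEdge p i2 j2 ∧
    i1 < i2 ∧ i2 < j1 ∧ j1 < j2 ∧
    k - 2 ≤ Nat.card {h : ℕ // isHead p h ∧ i2 < h ∧ h < j1}

/-- number of cycles (including fixed points) of a permutation of `Fin n`. -/
def cycleCount {n : ℕ} (σ : Equiv.Perm (Fin n)) : ℕ :=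
  σ.cycleType.card + (n - σ.cycleType.sum)

/-- the signed Stirling number of the first kind: `(-1)^(n-k)` times the number of
permutations of `[n]` with `k` cycles. -/
noncomputable def stirlingFirst (n k : ℕ) : ℤ :=
  (-1) ^ (n - k) * (Nat.card {σ : Equiv.Perm (Fin n) // cycleCount σ = k} : ℤ)

/-- the Stirling number of the second kind: the number of set partitions of `[n]`
into `k` blocks. -/
noncomputable def stirlingSecond (n k : ℕ) : ℕ :=
  Nat.card {p : Finpartition (Finset.Icc 1 n : Finset ℕ) // p.parts.card = k}

/-- the Bell number: the number of set partitions of `[n]`. -/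
noncomputable def bell (n : ℕ) : ℕ := Nat.card (Finpartition (Finset.Icc 1 n : Finset ℕ))

/-- the number of `k`-distant noncrossing partitions of `[n]`. -/
noncomputable def dcount (k n : ℕ) : ℕ :=
  Nat.card {p : Finpartition (Finset.Icc 1 n : Finset ℕ) // kDistantNoncrossing k p}

/-- the number of `12⋯k12`-avoiding (= `k`-front noncrossing) partitions of `[n]`. -/
noncomputable def fcount (k n : ℕ) : ℕ :=
  Nat.card {p : Finpartition (Finset.Icc 1 n : Finset ℕ) // kFrontNoncrossing k p}

/-! Both sides satisfy the recurrence `s(n+1, k+1) = s(n, k) - n * s(n, k+1)` of Mathlib's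
`Nat.stirlingFirst` (up to the sign `(-1)^(n-k)`). On the permutation side, `decomposeFin` writes a
permutation of `Fin (n+1)` as `swap 0 p` times a permutation `e` of the other points: for `p = 0`
this adds the fixed point `0`, otherwise it inserts `0` into the cycle of `p`, keeping the number
of cycles of `e`. On the path side, one splits off the last step, of weight `1` (east) or
`-(a+1)` (north). -/

open Finset

namespace Equiv.Perm

variable {α : Type*} [DecidableEq α] {a b : α}

theorem disjoint_swap_of_apply_eq_self {τ : Perm α} (ha : τ a = a) (hb : τ b = b) :
    (swap a b).Disjoint τ := by
  intro x
  by_cases hxa : x = a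
  · exact Or.inr (hxa ▸ ha)
  by_cases hxb : x = b
  · exact Or.inr (hxb ▸ hb)
  exact Or.inl (swap_apply_of_ne_of_ne hxa hxb)

variable [Fintype α]

theorem IsCycle.swap_mul_of_apply_eq_self {c : Perm α} (hc : c.IsCycle) (ha : c a = a)
    (hb : c b ≠ b) : (swap a b * c).IsCycle := by
  have hab : a ≠ b := fun h => hb (h ▸ ha)
  have ha_supp : a ∉ c.support := notMem_support.2 ha
  -- `swap a b * c` is `c` with `a` inserted just before `b`.
  have hg : ∀ y, y ≠ a → c y ≠ b → (swap a b * c) y = c y := fun y hya hyb => by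
    have hcya : c y ≠ a := fun h => hya (c.injective (h.trans ha.symm))
    rw [mul_apply, swap_apply_of_ne_of_ne hcya hyb]
  have orbit : ∀ k : ℕ, (swap a b * c).SameCycle b ((c ^ k) b) := by
    intro k
    induction k with
    | zero => rfl
    | succ k ih =>
      rw [pow_succ', mul_apply]
      by_cases hk : c ((c ^ k) b) = b
      · rw [hk]
      · have hka : (c ^ k) b ≠ a := fun h =>
          ha_supp (h ▸ pow_apply_mem_support.2 (mem_support.2 hb))
        rw [← hg _ hka hk]
        exact sameCycle_apply_right.2 ih
  refine ⟨b, by rwa [hg b hab.symm hb], fun y hy => ?_⟩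
  by_cases hya : y = a
  · rw [hya]
    exact SameCycle.symm ⟨1, by rw [zpow_one, mul_apply, ha, swap_apply_left]⟩
  · have hcy : c y ≠ y := by
      intro hcy
      have hyb : y ≠ b := by rintro rfl; exact hb hcy
      exact hy ((hg y hya (by rwa [hcy])).trans hcy)
    obtain ⟨k, rfl⟩ := hc.exists_pow_eq hb hcy
    exact orbit k

theorem support_swap_mul_of_apply_eq_self {τ : Perm α} (ha : τ a = a) (hb : τ b ≠ b) :
    (swap a b * τ).support = insert a τ.support := by
  have hab : a ≠ b := fun h => hb (h ▸ ha)
  have hga : (swap a b * τ) a = b := by rw [mul_apply, ha, swap_apply_left]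
  have hgb : (swap a b * τ) b ≠ a := by
    have hτb : τ b ≠ a := fun h => hab (τ.injective (ha.trans h.symm))
    rwa [mul_apply, swap_apply_of_ne_of_ne hτb hb]
  have h := support_swap_mul_eq (swap a b * τ) a (by rwa [hga])
  rw [hga, ← mul_assoc, swap_mul_self, one_mul] at h
  rw [h, sdiff_singleton_eq_erase, insert_erase (mem_support.2 (by rwa [hga, ne_comm]))]

theorem card_cycleType_swap_mul_of_apply_eq_self {τ : Perm α} (ha : τ a = a) (hb : τ b ≠ b) :
    Multiset.card (swap a b * τ).cycleType = Multiset.card τ.cycleType := by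
  set c := τ.cycleOf b
  set ρ := τ * c⁻¹
  have hc : c.IsCycle := isCycle_cycleOf τ hb
  have hcb : c b ≠ b := by rwa [cycleOf_apply_self]
  have hca : c a = a := by rw [cycleOf_apply]; split_ifs <;> simp [ha]
  have hρc : ρ.Disjoint c := disjoint_mul_inv_of_mem_cycleFactorsFinset
    (cycleOf_mem_cycleFactorsFinset_iff.2 (mem_support.2 hb))
  have hτ : τ = ρ * c := by simp [ρ]
  have hρa : ρ a = a := by rw [hτ, mul_apply, hca] at ha; exact ha
  have hρb : ρ b = b := (hρc b).resolve_right hcb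
  have hρ_swap_c : ρ.Disjoint (swap a b * c) := by
    rw [disjoint_iff_disjoint_support, support_swap_mul_of_apply_eq_self hca hcb,
      disjoint_insert_right, notMem_support]
    exact ⟨hρa, disjoint_iff_disjoint_support.1 hρc⟩
  have hmul : swap a b * τ = ρ * (swap a b * c) := by
    rw [hτ, ← mul_assoc, (disjoint_swap_of_apply_eq_self hρa hρb).commute.eq, mul_assoc]
  rw [hmul, hρ_swap_c.cycleType_mul, (hc.swap_mul_of_apply_eq_self hca hcb).cycleType,
    hτ, hρc.cycleType_mul, hc.cycleType, Multiset.card_add, Multiset.card_add]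
  rfl

theorem card_cycleType_swap_mul_add_card_support {τ : Perm α} (ha : τ a = a) (hab : a ≠ b) :
    Multiset.card (swap a b * τ).cycleType + #τ.support + 1 =
      Multiset.card τ.cycleType + #(swap a b * τ).support := by
  by_cases hb : τ b = b
  · have hd := disjoint_swap_of_apply_eq_self ha hb
    rw [hd.cycleType_mul, hd.card_support_mul, (isCycle_swap hab).cycleType, card_support_swap hab]
    simp only [Multiset.card_add, Multiset.card_singleton]
    omega
  · rw [card_cycleType_swap_mul_of_apply_eq_self ha hb, support_swap_mul_of_apply_eq_self ha hb,
      card_insert_of_notMem (notMem_support.2 ha)]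
    omega

theorem decomposeFin_symm_eq_swap_mul {n : ℕ} (p : Fin (n + 1)) (e : Perm (Fin n)) :
    decomposeFin.symm (p, e) = swap 0 p * decomposeFin.symm (0, e) := by
  ext x
  cases x using Fin.cases <;> simp

theorem decomposeFin_symm_zero {n : ℕ} (e : Perm (Fin n)) :
    decomposeFin.symm (0, e) = e.extendDomain (finSuccAboveEquiv 0) := by
  ext x
  cases x using Fin.cases with
  | zero => rw [decomposeFin_symm_apply_zero, extendDomain_apply_not_subtype _ _ (by simp)]
  | succ y =>
    have hy : y.succ = (finSuccAboveEquiv 0 y : Fin (n + 1)) := by simp [finSuccAboveEquiv_apply]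
    rw [decomposeFin_symm_apply_succ, hy, extendDomain_apply_image]
    simp [finSuccAboveEquiv_apply]

end Equiv.Perm

open Equiv Equiv.Perm

theorem cycleCount_swap_mul_add_one {n : ℕ} {τ : Perm (Fin n)} {a b : Fin n} (ha : τ a = a)
    (hab : a ≠ b) : cycleCount (swap a b * τ) + 1 = cycleCount τ := by
  have h := card_cycleType_swap_mul_add_card_support ha hab
  have hle := card_le_univ (swap a b * τ).support
  have hle' := card_le_univ τ.support
  simp only [cycleCount, sum_cycleType, Fintype.card_fin] at h hle hle' ⊢
  omega

theorem cycleCount_decomposeFin_symm {n : ℕ} (p : Fin (n + 1)) (e : Perm (Fin n)) :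
    cycleCount (decomposeFin.symm (p, e)) = cycleCount e + if p = 0 then 1 else 0 := by
  have h₀ : cycleCount (decomposeFin.symm (0, e)) = cycleCount e + 1 := by
    have hle := sum_cycleType_le e
    rw [Fintype.card_fin] at hle
    simp only [cycleCount, decomposeFin_symm_zero, cycleType_extendDomain]
    omega
  split_ifs with hp
  · rw [hp, h₀]
  · have h := cycleCount_swap_mul_add_one (τ := decomposeFin.symm (0, e))
      (decomposeFin_symm_apply_zero 0 e) (Ne.symm hp)
    rw [← decomposeFin_symm_eq_swap_mul, h₀] at h
    omega

theorem card_filter_cycleCount_succ (n k : ℕ) :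
    #{σ : Perm (Fin (n + 1)) | cycleCount σ = k} =
      #{e : Perm (Fin n) | cycleCount e + 1 = k} + n * #{e : Perm (Fin n) | cycleCount e = k} := by
  simp only [card_filter]
  rw [← Equiv.sum_comp decomposeFin.symm, Fintype.sum_prod_type, Fin.sum_univ_succ]
  simp [cycleCount_decomposeFin_symm, Fin.succ_ne_zero]

theorem card_filter_cycleCount_eq_stirlingFirst (n k : ℕ) :
    #{σ : Perm (Fin n) | cycleCount σ = k} = Nat.stirlingFirst n k := by
  induction n generalizing k with
  | zero => cases k <;> simp [cycleCount, filter_singleton]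
  | succ n ih =>
    rw [card_filter_cycleCount_succ, ih]
    cases k with
    | zero => cases n <;> simp
    | succ k => simp [ih, Nat.stirlingFirst_succ_succ, add_comm]

theorem stirlingFirst_eq_neg_one_pow_mul (n k : ℕ) :
    stirlingFirst n k = (-1) ^ (n - k) * Nat.stirlingFirst n k := by
  rw [stirlingFirst, Nat.card_eq_fintype_card, Fintype.card_subtype,
    card_filter_cycleCount_eq_stirlingFirst]

section LatticePath

variable {R : Type*} [CommSemiring R]

def latticePathWeightSum (w : ℕ → R) (a j : ℕ) : R :=
  ∑ f ∈ univ.filter (fun f : Fin a → Bool => #{i | f i = true} = j),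
    ∏ i : Fin a, if f i then w i else 1

theorem latticePathWeightSum_eq_zero_of_lt (w : ℕ → R) {a j : ℕ} (h : a < j) :
    latticePathWeightSum w a j = 0 := by
  refine sum_eq_zero fun f hf => absurd (mem_filter.1 hf).2 ?_
  have := card_le_univ (univ.filter fun i : Fin a => f i = true)
  rw [Fintype.card_fin] at this
  omega

theorem latticePathWeightSum_zero_right (w : ℕ → R) (a : ℕ) :
    latticePathWeightSum w a 0 = 1 := by
  have h : univ.filter (fun f : Fin a → Bool => #{i | f i = true} = 0) = {fun _ => false} := by
    ext f
    simp [funext_iff]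
  rw [latticePathWeightSum, h]
  simp

theorem latticePathWeightSum_succ_succ (w : ℕ → R) (a j : ℕ) :
    latticePathWeightSum w (a + 1) (j + 1) =
      latticePathWeightSum w a (j + 1) + latticePathWeightSum w a j * w a := by
  simp only [latticePathWeightSum, sum_filter, card_filter]
  rw [← (Fin.snocEquiv fun _ => Bool).sum_comp, Fintype.sum_prod_type, Fintype.sum_bool]
  simp [Fin.snocEquiv, Fin.sum_univ_castSucc, Fin.prod_univ_castSucc, sum_mul, ite_mul]
  exact add_comm _ _

end LatticePath

theorem latticePathWeightSum_neg_succ_eq_stirlingFirst {a j k : ℕ} (h : j + k = a + 1) :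
    latticePathWeightSum (fun i => -((i : ℤ) + 1)) a j =
      (-1) ^ j * Nat.stirlingFirst (a + 1) k := by
  induction a generalizing j k with
  | zero =>
    rcases j with _ | j
    · simp [latticePathWeightSum_zero_right, show k = 1 by omega, Nat.stirlingFirst_self]
    · rw [latticePathWeightSum_eq_zero_of_lt _ (by omega), show k = 0 by omega]
      simp
  | succ a ih =>
    rcases j with _ | j
    · simp [latticePathWeightSum_zero_right, show k = a + 2 by omega, Nat.stirlingFirst_self]
    rcases k with _ | k
    · rw [latticePathWeightSum_eq_zero_of_lt _ (by omega)]
      simp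
    rw [latticePathWeightSum_succ_succ, ih (j := j + 1) (k := k) (by omega),
      ih (j := j) (k := k + 1) (by omega), Nat.stirlingFirst_succ_succ (a + 1) k]
    push_cast
    ring

/-- A path is encoded by `f : Fin (m - 1) → Bool`, `true` being a north step; `i : Fin (m - 1)`
is the `(i + 1)`-th step. -/
theorem stirlingFirst_eq_sum_latticePath_weights (m r : ℕ) (h1 : 1 ≤ r) (h2 : r ≤ m) :
    stirlingFirst m r =
      ∑ f ∈ Finset.univ.filter
          (fun f : Fin (m - 1) → Bool =>
            (Finset.univ.filter (fun i => f i = true)).card = m - r),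
        ∏ i : Fin (m - 1), (if f i then -((i : ℕ) + 1 : ℤ) else 1) := by
  have h := latticePathWeightSum_neg_succ_eq_stirlingFirst (a := m - 1) (j := m - r) (k := r) (by omega)
  rw [Nat.sub_add_cancel (by omega)] at h
  rw [stirlingFirst_eq_neg_one_pow_mul, ← h]
  rfl
end

section
/- For each fixed nonnegative integer m, the exponential generating function Σ_{n≥0} p(m, m+n) x^n / n! equals exp(m·x + e^x - 1), where p(m,N) is the number of set partitions of [N] in which each of 1,...,m is the minimum element of its block. -/
/-- the number of set partitions of `[n]` in which each of `1,…,m` is the head of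
its block. -/
noncomputable def headCount (m n : ℕ) : ℕ :=
  Nat.card {p : Finpartition (Finset.Icc 1 n : Finset ℕ) // ∀ i, 1 ≤ i → i ≤ m → isHead p i}

/-- `exp(G)` for a formal power series `G` over `ℚ` with zero constant term:
the coefficient of `x^n` in `Σ_k G^k / k!` (only `k ≤ n` contribute). -/
noncomputable def expComp (G : PowerSeries ℚ) : PowerSeries ℚ :=
  PowerSeries.mk fun n =>
    ∑ k ∈ Finset.range (n + 1), (PowerSeries.coeff n (G ^ k)) / (k.factorial : ℚ)

/-! Let `F m = exp(m x + eˣ - 1)`. Then `F m' = (m + eˣ) F m = m F m + F (m + 1)`, where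
`eˣ F m = F (m + 1)` because both sides solve `f' = (m + 1 + eˣ) f` with `f(0) = 1`. On
coefficients this is the recurrence `p(m, m+n+1) = m p(m, m+n) + p(m+1, m+n+1)`: in a partition
counted on the left, either `m + 1` is a head, or it lies in the block of one of the heads
`1, …, m`, and deleting it leaves a partition counted by `p(m, m+n)`. To avoid relabelling after
the deletion, the recurrence is proved for partitions of an arbitrary finite linearly ordered set
whose elements below a given `x` are all heads, deleting `x` itself. -/

open Finset

theorem Nat.card_subtype_eq_card_and_add_card_and_not {β : Type*} [Finite β] (p q : β → Prop) :
    Nat.card {b // p b} = Nat.card {b // p b ∧ q b} + Nat.card {b // p b ∧ ¬ q b} := by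
  classical
  rw [← Nat.card_sum]
  exact Nat.card_congr <| (Equiv.sumCompl fun b : {b // p b} => q b).symm.trans <|
    Equiv.sumCongr (Equiv.subtypeSubtypeEquivSubtypeInter p q)
      (Equiv.subtypeSubtypeEquivSubtypeInter p fun b => ¬ q b)

namespace Finpartition

variable {α : Type*}

section DecidableEq

variable [DecidableEq α] {s : Finset α} {x : α}

theorem ext_of_part_eq {P Q : Finpartition s} (h : ∀ a ∈ s, P.part a = Q.part a) : P = Q := by
  have key : ∀ {P Q : Finpartition s}, (∀ a ∈ s, P.part a = Q.part a) →
      ∀ B ∈ P.parts, B ∈ Q.parts := by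
    intro P Q h B hB
    obtain ⟨a, ha⟩ := P.nonempty_of_mem_parts hB
    rw [← P.part_eq_of_mem hB ha, h a (P.subset hB ha)]
    exact Q.part_mem.2 (P.subset hB ha)
  ext B
  exact ⟨key h B, key (fun a ha => (h a ha).symm) B⟩

theorem part_eq_of_mem_part {P : Finpartition s} {a b : α} (h : a ∈ P.part b) :
    P.part a = P.part b :=
  P.part_eq_of_mem (P.part_mem.2 (P.part_nonempty.1 ⟨a, h⟩)) h

-- If `i ∉ s.erase x`, then `R.part i = ∅` and `x` becomes a singleton block.
def insertInPart (R : Finpartition (s.erase x)) (hx : x ∈ s) (i : α) : Finpartition s :=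
  ofExistsUnique (insert (insert x (R.part i)) (R.parts.erase (R.part i)))
    (by
      intro p hp
      rcases mem_insert.1 hp with rfl | hp
      · exact insert_subset hx ((R.part_subset i).trans (erase_subset x s))
      · exact (R.subset (mem_of_mem_erase hp)).trans (erase_subset x s))
    (by
      intro a ha
      by_cases hai : a = x ∨ a ∈ R.part i
      · refine ⟨insert x (R.part i), ⟨mem_insert_self _ _, mem_insert.2 hai⟩, ?_⟩
        rintro t ⟨ht, hat⟩
        rcases mem_insert.1 ht with rfl | ht
        · rfl
        obtain ⟨hti, ht⟩ := mem_erase.1 ht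
        rcases hai with rfl | hai
        · exact absurd (R.subset ht hat) (notMem_erase a s)
        · exact absurd (R.eq_of_mem_parts ht
            (R.part_mem.2 (R.part_nonempty.1 ⟨a, hai⟩)) hat hai) hti
      · rw [not_or] at hai
        have ha' : a ∈ s.erase x := mem_erase.2 ⟨hai.1, ha⟩
        refine ⟨R.part a, ⟨mem_insert_of_mem (mem_erase.2 ⟨?_, R.part_mem.2 ha'⟩),
          R.mem_part ha'⟩, ?_⟩
        · exact fun h => hai.2 (h ▸ R.mem_part ha')
        rintro t ⟨ht, hat⟩
        rcases mem_insert.1 ht with rfl | ht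
        · exact absurd (mem_insert.1 hat) (by tauto)
        · exact (R.part_eq_of_mem (mem_of_mem_erase ht) hat).symm)
    (by
      rw [mem_insert, not_or]
      exact ⟨(insert_ne_empty _ _).symm, fun h => R.empty_notMem_parts (mem_of_mem_erase h)⟩)

theorem part_insertInPart (R : Finpartition (s.erase x)) (hx : x ∈ s) (i : α) {a : α}
    (ha : a ∈ s) : (R.insertInPart hx i).part a =
      if a = x ∨ a ∈ R.part i then insert x (R.part i) else R.part a := by
  split_ifs with h
  · exact part_eq_of_mem _ (mem_insert_self _ _) (mem_insert.2 h)
  · rw [not_or] at h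
    have ha' : a ∈ s.erase x := mem_erase.2 ⟨h.1, ha⟩
    refine part_eq_of_mem _ (mem_insert_of_mem (mem_erase.2 ⟨?_, R.part_mem.2 ha'⟩))
      (R.mem_part ha')
    exact fun hai => h.2 (hai ▸ R.mem_part ha')

def erase (P : Finpartition s) (x : α) : Finpartition (s.erase x) :=
  (P.avoid ({x} : Finset α)).copy (sdiff_singleton_eq_erase x s)

theorem part_erase (P : Finpartition s) {a : α} (ha : a ∈ s.erase x) :
    (P.erase x).part a = (P.part a).erase x := by
  obtain ⟨hax, ha⟩ := mem_erase.1 ha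
  have hmem : (P.part a).erase x ∈ (P.avoid ({x} : Finset α)).parts := by
    rw [mem_avoid, ← sdiff_singleton_eq_erase]
    exact ⟨P.part a, P.part_mem.2 ha, fun h => hax (mem_singleton.1 (h (P.mem_part ha))), rfl⟩
  exact part_eq_of_mem _ hmem (mem_erase.2 ⟨hax, P.mem_part ha⟩)

theorem erase_insertInPart (R : Finpartition (s.erase x)) (hx : x ∈ s) (i : α) :
    (R.insertInPart hx i).erase x = R := by
  refine ext_of_part_eq fun a ha => ?_
  have hxR : ∀ b, x ∉ R.part b := fun b h => notMem_erase x s (R.part_subset b h)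
  rw [part_erase _ ha, part_insertInPart _ _ _ (mem_of_mem_erase ha)]
  split_ifs with h
  · rcases h with rfl | h
    · exact absurd ha (notMem_erase a s)
    · rw [erase_insert (hxR i), part_eq_of_mem_part h]
  · exact erase_eq_of_notMem (hxR a)

theorem insertInPart_erase (P : Finpartition s) (hx : x ∈ s) {i : α} (hi : i ∈ P.part x)
    (hix : i ≠ x) : (P.erase x).insertInPart hx i = P := by
  refine ext_of_part_eq fun a ha => ?_
  rw [part_insertInPart _ _ _ ha, part_erase _ (mem_erase.2 ⟨hix, P.part_subset x hi⟩),
    part_eq_of_mem_part hi]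
  split_ifs with h
  · rw [insert_erase (P.mem_part hx)]
    rcases h with rfl | h
    · rfl
    · exact (part_eq_of_mem_part (mem_of_mem_erase h)).symm
  · rw [not_or, mem_erase, not_and_or, not_not] at h
    have hax : a ∉ P.part x := by tauto
    rw [part_erase _ (mem_erase.2 ⟨h.1, ha⟩), erase_eq_of_notMem]
    exact fun hxa => hax (part_eq_of_mem_part hxa ▸ P.mem_part ha)

end DecidableEq

section LinearOrder

variable [LinearOrder α] {s : Finset α} {x h i : α}

def IsHead (P : Finpartition s) (a : α) : Prop := ∃ B ∈ P.parts, a ∈ B ∧ ∀ b ∈ B, a ≤ b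

theorem isHead_iff {P : Finpartition s} {a : α} :
    P.IsHead a ↔ a ∈ s ∧ ∀ b ∈ P.part a, a ≤ b := by
  constructor
  · rintro ⟨B, hB, haB, hmin⟩
    rw [P.part_eq_of_mem hB haB]
    exact ⟨P.subset hB haB, hmin⟩
  · rintro ⟨ha, hmin⟩
    exact ⟨P.part a, P.part_mem.2 ha, P.mem_part ha, hmin⟩

theorem part_eq_singleton_of_forall_isHead {P : Finpartition s} (hP : ∀ a ∈ s, P.IsHead a)
    {a : α} (ha : a ∈ s) : P.part a = {a} := by
  refine eq_singleton_iff_unique_mem.2 ⟨P.mem_part ha, fun b hb => le_antisymm ?_ ?_⟩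
  · exact (isHead_iff.1 (hP b (P.part_subset a hb))).2 a
      (part_eq_of_mem_part hb ▸ P.mem_part ha)
  · exact (isHead_iff.1 (hP a ha)).2 b hb

theorem IsHead.insertInPart {R : Finpartition (s.erase x)} (hR : R.IsHead h) (hx : x ∈ s)
    (i : α) (hhx : h < x) : (R.insertInPart hx i).IsHead h := by
  obtain ⟨hh, hmin⟩ := isHead_iff.1 hR
  refine isHead_iff.2 ⟨mem_of_mem_erase hh, ?_⟩
  rw [part_insertInPart _ _ _ (mem_of_mem_erase hh)]
  split_ifs with hhi
  · rw [← part_eq_of_mem_part (hhi.resolve_left hhx.ne)]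
    rintro b hb
    rcases mem_insert.1 hb with rfl | hb
    exacts [hhx.le, hmin b hb]
  · exact hmin

theorem not_isHead_insertInPart (R : Finpartition (s.erase x)) (hx : x ∈ s)
    (hi : i ∈ s.erase x) (hix : i < x) : ¬ (R.insertInPart hx i).IsHead x := by
  intro hxh
  have hi' : i ∈ (R.insertInPart hx i).part x := by
    rw [part_insertInPart _ _ _ hx, if_pos (Or.inl rfl)]
    exact mem_insert_of_mem (R.mem_part hi)
  exact hix.not_ge ((isHead_iff.1 hxh).2 i hi')

theorem isLeast_part_insertInPart {R : Finpartition (s.erase x)} (hR : R.IsHead i) (hx : x ∈ s)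
    (hix : i < x) : IsLeast ((R.insertInPart hx i).part x : Set α) i := by
  obtain ⟨hi, hmin⟩ := isHead_iff.1 hR
  rw [part_insertInPart _ _ _ hx, if_pos (Or.inl rfl), coe_insert]
  exact ⟨Or.inr (R.mem_part hi), by rintro b (rfl | hb); exacts [hix.le, hmin b hb]⟩

theorem IsHead.erase {P : Finpartition s} (hP : P.IsHead h) (hhx : h ≠ x) :
    (P.erase x).IsHead h := by
  obtain ⟨hh, hmin⟩ := isHead_iff.1 hP
  have hh' : h ∈ s.erase x := mem_erase.2 ⟨hhx, hh⟩
  rw [isHead_iff, part_erase _ hh']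
  exact ⟨hh', fun b hb => hmin b (mem_of_mem_erase hb)⟩

theorem min'_part_lt_of_not_isHead {P : Finpartition s} (hx : x ∈ s) (hP : ¬ P.IsHead x) :
    (P.part x).min' ⟨x, P.mem_part hx⟩ < x := by
  rw [isHead_iff, not_and, not_forall₂] at hP
  obtain ⟨b, hb, hbx⟩ := hP hx
  exact (min'_le _ b hb).trans_lt (not_le.1 hbx)

theorem card_forall_isHead_and_not_isHead (hx : x ∈ s) :
    Nat.card {P : Finpartition s // (∀ h ∈ s.filter (· < x), P.IsHead h) ∧ ¬ P.IsHead x} =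
      #(s.filter (· < x)) *
        Nat.card {R : Finpartition (s.erase x) // ∀ h ∈ s.filter (· < x), R.IsHead h} := by
  rw [← Nat.card_eq_finsetCard, ← Nat.card_prod]
  refine Nat.card_congr
    { toFun := fun P => (⟨(P.1.part x).min' ⟨x, P.1.mem_part hx⟩, ?_⟩, ⟨P.1.erase x, ?_⟩)
      invFun := fun iR => ⟨iR.2.1.insertInPart hx iR.1, ?_, ?_⟩
      left_inv := fun P => ?_
      right_inv := fun iR => ?_ }
  · exact mem_filter.2 ⟨P.1.part_subset x (min'_mem _ _), min'_part_lt_of_not_isHead hx P.2.2⟩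
  · exact fun h hh => (P.2.1 h hh).erase (mem_filter.1 hh).2.ne
  · exact fun h hh => (iR.2.2 h hh).insertInPart hx _ (mem_filter.1 hh).2
  · obtain ⟨hi, hix⟩ := mem_filter.1 iR.1.2
    exact not_isHead_insertInPart _ hx (mem_erase.2 ⟨hix.ne, hi⟩) hix
  · exact Subtype.ext (insertInPart_erase _ hx (min'_mem _ ⟨x, P.1.mem_part hx⟩)
      (min'_part_lt_of_not_isHead hx P.2.2).ne)
  · obtain ⟨⟨i, hi⟩, ⟨R, hR⟩⟩ := iR
    have hix : i < x := (mem_filter.1 hi).2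
    refine Prod.ext (Subtype.ext ?_) (Subtype.ext (erase_insertInPart R hx i))
    exact IsLeast.unique (isLeast_min' _ ⟨x, mem_part _ hx⟩)
      (isLeast_part_insertInPart (hR i hi) hx hix)

end LinearOrder

end Finpartition

section CountWithHeads

open Finpartition

variable {α : Type*} [LinearOrder α]

noncomputable def countWithHeads (H s : Finset α) : ℕ :=
  Nat.card {P : Finpartition s // ∀ h ∈ H, P.IsHead h}

theorem countWithHeads_self (s : Finset α) : countWithHeads s s = 1 := by
  rw [countWithHeads, Nat.card_eq_one_iff_unique]
  refine ⟨⟨fun P Q => Subtype.ext (ext_of_part_eq fun a ha => ?_)⟩, ⟨⊥, fun a ha => ?_⟩⟩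
  · rw [part_eq_singleton_of_forall_isHead P.2 ha, part_eq_singleton_of_forall_isHead Q.2 ha]
  · exact ⟨{a}, mem_bot_iff.2 ⟨a, ha, rfl⟩, mem_singleton_self a,
      fun b hb => (mem_singleton.1 hb).ge⟩

theorem countWithHeads_filter_lt {s : Finset α} {x : α} (hx : x ∈ s) :
    countWithHeads (s.filter (· < x)) s =
      countWithHeads (insert x (s.filter (· < x))) s +
        #(s.filter (· < x)) * countWithHeads (s.filter (· < x)) (s.erase x) := by
  simp only [countWithHeads, forall_mem_insert, and_comm (a := IsHead _ x)]
  rw [Nat.card_subtype_eq_card_and_add_card_and_not _ fun P : Finpartition s => P.IsHead x,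
    card_forall_isHead_and_not_isHead hx]

end CountWithHeads

section GeneratingFunction

open PowerSeries

theorem PowerSeries.eq_of_derivative_eq_mul {R : Type*} [CommRing R] [IsAddTorsionFree R]
    {H f g : R⟦X⟧} (hf : d⁄dX R f = H * f) (hg : d⁄dX R g = H * g)
    (h0 : constantCoeff f = constantCoeff g) : f = g := by
  ext n
  induction n using Nat.strong_induction_on with
  | _ n ih =>
    cases n with
    | zero => simpa using h0
    | succ n =>
      have h : coeff n (d⁄dX R f) = coeff n (d⁄dX R g) := by
        rw [hf, hg, coeff_mul, coeff_mul]
        refine Finset.sum_congr rfl fun p hp => ?_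
        rw [ih p.2 (by have := Finset.HasAntidiagonal.mem_antidiagonal.mp hp; omega)]
      rw [coeff_derivative, coeff_derivative, ← Nat.cast_succ, mul_comm, ← nsmul_eq_mul,
        mul_comm, ← nsmul_eq_mul] at h
      exact (smul_right_inj n.succ_ne_zero).mp h

theorem expComp_eq_subst {G : ℚ⟦X⟧} (hG : constantCoeff G = 0) :
    expComp G = (exp ℚ).subst G := by
  ext n
  rw [expComp, coeff_mk, coeff_subst' (HasSubst.of_constantCoeff_zero' hG),
    finsum_eq_sum_of_support_subset _ (s := Finset.range (n + 1))]
  · simp [coeff_exp, div_eq_inv_mul]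
  · intro d hd
    rw [Finset.coe_range, Set.mem_Iio, Nat.lt_succ_iff]
    by_contra! hnd
    have hpow : coeff n (G ^ d) = 0 := coeff_of_lt_order n
      ((le_order_pow_of_constantCoeff_eq_zero d hG).trans_lt' (by exact_mod_cast hnd))
    exact hd (by simp [hpow])

theorem constantCoeff_expComp (G : ℚ⟦X⟧) : constantCoeff (expComp G) = 1 := by
  rw [← coeff_zero_eq_constantCoeff_apply, expComp, coeff_mk]
  simp

theorem derivative_expComp {G : ℚ⟦X⟧} (hG : constantCoeff G = 0) :
    d⁄dX ℚ (expComp G) = d⁄dX ℚ G * expComp G := by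
  rw [expComp_eq_subst hG, derivative_subst (HasSubst.of_constantCoeff_zero' hG), derivative_exp,
    mul_comm]

theorem expComp_add {G H : ℚ⟦X⟧} (hG : constantCoeff G = 0) (hH : constantCoeff H = 0) :
    expComp (G + H) = expComp G * expComp H := by
  refine eq_of_derivative_eq_mul (H := d⁄dX ℚ G + d⁄dX ℚ H)
    (by rw [derivative_expComp (by rw [map_add, hG, hH, add_zero]), map_add]) ?_ ?_
  · rw [Derivation.leibniz, derivative_expComp hG, derivative_expComp hH, smul_eq_mul, smul_eq_mul]
    ring
  · rw [map_mul, constantCoeff_expComp, constantCoeff_expComp, constantCoeff_expComp, mul_one]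

theorem expComp_X : expComp X = exp ℚ := by
  rw [expComp_eq_subst constantCoeff_X, X_subst]

noncomputable def headEgf (m : ℕ) : ℚ⟦X⟧ := expComp ((m : ℚ) • X + exp ℚ - 1)

theorem constantCoeff_smul_X_add_exp_sub_one (c : ℚ) :
    constantCoeff (c • X + exp ℚ - 1) = 0 := by
  simp [constantCoeff_exp]

theorem headEgf_succ (m : ℕ) : headEgf (m + 1) = headEgf m * exp ℚ := by
  have h := expComp_add (constantCoeff_smul_X_add_exp_sub_one (m : ℚ)) constantCoeff_X
  rw [expComp_X] at h
  rw [headEgf, headEgf, ← h, Nat.cast_succ, add_smul, one_smul]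
  congr 1
  abel

theorem derivative_headEgf (m : ℕ) :
    d⁄dX ℚ (headEgf m) = (m : ℚ) • headEgf m + headEgf (m + 1) := by
  have harg : d⁄dX ℚ ((m : ℚ) • X + exp ℚ - 1) = C (m : ℚ) + exp ℚ := by
    simp [derivative_exp, smul_eq_C_mul]
  rw [headEgf_succ, headEgf, derivative_expComp (constantCoeff_smul_X_add_exp_sub_one _), harg,
    add_mul, ← smul_eq_C_mul, mul_comm (exp ℚ)]

end GeneratingFunction

section

open PowerSeries Nat

variable {α : Type*} [LinearOrder α]

theorem filter_lt_min'_sdiff {H s : Finset α} (hHs : H ⊆ s)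
    (hH : ∀ a ∈ s, ∀ b ∈ H, a < b → a ∈ H) (hne : (s \ H).Nonempty) :
    s.filter (· < (s \ H).min' hne) = H := by
  ext a
  rw [mem_filter]
  constructor
  · rintro ⟨ha, hlt⟩
    by_contra haH
    exact (min'_le _ a (mem_sdiff.2 ⟨ha, haH⟩)).not_gt hlt
  · intro haH
    refine ⟨hHs haH, lt_of_not_ge fun hle => ?_⟩
    obtain ⟨hs, hnot⟩ := mem_sdiff.1 (min'_mem _ hne)
    rcases hle.lt_or_eq with hlt | heq
    · exact hnot (hH _ hs a haH hlt)
    · exact hnot (heq ▸ haH)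

theorem countWithHeads_div_factorial (n : ℕ) {H s : Finset α} (hHs : H ⊆ s)
    (hH : ∀ a ∈ s, ∀ b ∈ H, a < b → a ∈ H) (hn : #s = #H + n) :
    (countWithHeads H s : ℚ) / n ! = coeff n (headEgf #H) := by
  induction n generalizing H s with
  | zero =>
    rw [eq_of_subset_of_card_le hHs hn.le, countWithHeads_self, coeff_zero_eq_constantCoeff_apply,
      headEgf, constantCoeff_expComp]
    simp
  | succ n ih =>
    have hne : (s \ H).Nonempty := by
      rw [← card_pos, card_sdiff_of_subset hHs]
      omega
    set x := (s \ H).min' hne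
    obtain ⟨hxs, hxH⟩ := mem_sdiff.1 (min'_mem _ hne)
    have hrec := countWithHeads_filter_lt hxs
    rw [filter_lt_min'_sdiff hHs hH hne] at hrec
    have hinsert : ∀ a ∈ s, ∀ b ∈ insert x H, a < b → a ∈ insert x H := by
      rintro a ha b hb hab
      rcases mem_insert.1 hb with rfl | hb
      · refine mem_insert_of_mem (not_not.1 fun haH => ?_)
        exact (min'_le _ a (mem_sdiff.2 ⟨ha, haH⟩)).not_gt hab
      · exact mem_insert_of_mem (hH a ha b hb hab)
    have hhead := ih (insert_subset hxs hHs) hinsert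
      (by rw [card_insert_of_notMem hxH]; omega)
    have herase := ih (H := H) (s := s.erase x) (subset_erase.2 ⟨hHs, hxH⟩)
      (fun a ha => hH a (mem_of_mem_erase ha)) (by rw [card_erase_of_mem hxs]; omega)
    have hd := congrArg (coeff n) (derivative_headEgf #H)
    rw [coeff_derivative, map_add, map_smul, ← herase, ← card_insert_of_notMem hxH,
      ← hhead, smul_eq_mul] at hd
    rw [eq_div_of_mul_eq (by positivity) hd, hrec, factorial_succ]
    push_cast
    field_simp
    ring

end

theorem headCount_eq_countWithHeads (m n : ℕ) :
    headCount m n = countWithHeads (Icc 1 m) (Icc 1 n) := by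
  simp only [headCount, countWithHeads, mem_Icc, and_imp]
  rfl

/-- `Σ_{n≥0} p(m, m+n) xⁿ/n! = exp(m·x + eˣ - 1)`. -/
theorem headCount_egf (m : ℕ) :
    (PowerSeries.mk fun n => (headCount m (m + n) : ℚ) / (n.factorial : ℚ)) =
      expComp ((m : ℚ) • PowerSeries.X + PowerSeries.exp ℚ - 1) := by
  ext n
  have hinitial : ∀ a ∈ Icc 1 (m + n), ∀ b ∈ Icc 1 m, a < b → a ∈ Icc 1 m := by
    simp only [mem_Icc]
    omega
  rw [PowerSeries.coeff_mk, headCount_eq_countWithHeads,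
    countWithHeads_div_factorial n (Icc_subset_Icc_right (by omega)) hinitial (by simp),
    Nat.card_Icc, Nat.add_sub_cancel, headEgf]
end

section
/- For fixed m ≥ 0 and n ≥ 0, p(m, m+n) = Σ_{i=0}^{n} C(n,i)·m^i·B(n-i), where B denotes the Bell numbers and p(m,N) is the number of set partitions of [N] in which each of 1,...,m is the minimum of its block. -/
/-! Each of `1, …, m` heads its block exactly when `1, …, m` lie in pairwise different blocks.
Such a partition of `[m + n]` is the same as a set `A` of the remaining `n` elements that share a
block with one of `1, …, m`, a map `A → [m]` saying which one, and an arbitrary partition of the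
other `n - #A` elements; grouping by `#A` gives the binomial sum. -/

open Finset

namespace Finpartition

variable {α β : Type*} [DecidableEq α] [DecidableEq β] {s : Finset α} {t : Finset β}

lemma parts_eq_image_part (P : Finpartition s) : P.parts = s.image P.part := by
  ext B
  rw [mem_image]
  constructor
  · exact fun hB => P.part_surjOn hB
  · rintro ⟨a, ha, rfl⟩
    exact P.part_mem.2 ha

lemma ext_of_part_eq_part_iff {P Q : Finpartition s}
    (h : ∀ a ∈ s, ∀ b ∈ s, P.part a = P.part b ↔ Q.part a = Q.part b) : P = Q := by
  have hpart : ∀ a ∈ s, P.part a = Q.part a := fun a ha => by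
    ext b
    by_cases hb : b ∈ s
    · rw [P.mem_part_iff_part_eq_part hb ha, Q.mem_part_iff_part_eq_part hb ha, h b hb a ha]
    · exact iff_of_false (fun h' => hb (P.part_subset a h')) (fun h' => hb (Q.part_subset a h'))
  ext1
  rw [P.parts_eq_image_part, Q.parts_eq_image_part]
  exact image_congr hpart

def ofFibers (s : Finset α) (φ : α → β) : Finpartition s :=
  ofSetSetoid (Setoid.ker φ) s

lemma part_ofFibers_eq_iff {φ : α → β} {a b : α} (ha : a ∈ s) (hb : b ∈ s) :
    (ofFibers s φ).part a = (ofFibers s φ).part b ↔ φ a = φ b := by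
  rw [← mem_part_iff_part_eq_part _ ha hb, ofFibers, mem_part_ofSetSetoid_iff_rel]
  simp [ha, hb, Setoid.ker_def, eq_comm]

lemma card_le_card_of_surjOn (g : β → α) (hg : Set.SurjOn g t s) :
    Nat.card (Finpartition s) ≤ Nat.card (Finpartition t) := by
  refine Nat.card_le_card_of_injective (fun P => ofFibers t (P.part ∘ g)) fun P Q hPQ => ?_
  refine ext_of_part_eq_part_iff fun a ha b hb => ?_
  obtain ⟨a', ha', rfl⟩ := hg ha
  obtain ⟨b', hb', rfl⟩ := hg hb
  have := congrArg (fun R => R.part a' = R.part b') hPQ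
  simp only [part_ofFibers_eq_iff ha' hb', Function.comp_apply] at this
  exact Iff.of_eq this

lemma card_eq_card_of_card_eq [Nonempty α] [Nonempty β] (h : #s = #t) :
    Nat.card (Finpartition s) = Nat.card (Finpartition t) := by
  have hst : (s : Set α).encard = (t : Set β).encard := by
    simp only [Set.encard_coe_eq_coe_finsetCard, h]
  obtain ⟨f, hf⟩ := s.finite_toSet.exists_bijOn_of_encard_eq hst
  obtain ⟨g, hg⟩ := t.finite_toSet.exists_bijOn_of_encard_eq hst.symm
  exact le_antisymm (card_le_card_of_surjOn g hg.surjOn) (card_le_card_of_surjOn f hf.surjOn)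

lemma card_eq_bell (s : Finset ℕ) : Nat.card (Finpartition s) = bell #s := by
  rw [bell, card_eq_card_of_card_eq (t := Icc 1 #s)]
  simp

end Finpartition

open Finpartition

variable {α : Type*} [DecidableEq α] {H T : Finset α}

/-- A partition of `H ∪ T` separating the elements of `H`, encoded by the set `A ⊆ T` of elements
sharing a block with an element of `H`, the element of `H` each of them is attached to, and the
partition of `T \ A`. -/
abbrev Attachment (H T : Finset α) : Type _ :=
  Σ A : T.powerset, (A.1 → H) × Finpartition (T \ A.1)

namespace Attachment

def label (d : Attachment H T) (x : α) : Finset α ⊕ α :=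
  if hx : x ∈ d.1.1 then .inr (d.2.1 ⟨x, hx⟩) else if x ∈ H then .inr x else .inl (d.2.2.part x)

def toFinpartition (d : Attachment H T) : Finpartition (H ∪ T) :=
  ofFibers (H ∪ T) d.label

variable {x : α}

lemma label_of_mem (d : Attachment H T) (hx : x ∈ d.1.1) : d.label x = .inr (d.2.1 ⟨x, hx⟩) := by
  simp [label, hx]

lemma label_of_mem_left (hHT : Disjoint H T) (d : Attachment H T) (hx : x ∈ H) :
    d.label x = .inr x := by
  have hxA : x ∉ d.1.1 := fun hxA => disjoint_left.1 hHT hx (mem_powerset.1 d.1.2 hxA)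
  simp [label, hxA, hx]

lemma label_of_mem_sdiff (hHT : Disjoint H T) (d : Attachment H T) (hx : x ∈ T \ d.1.1) :
    d.label x = .inl (d.2.2.part x) := by
  have hxH : x ∉ H := fun hxH => disjoint_left.1 hHT hxH (mem_sdiff.1 hx).1
  simp [label, (mem_sdiff.1 hx).2, hxH]

lemma injOn_part_toFinpartition (hHT : Disjoint H T) (d : Attachment H T) :
    Set.InjOn d.toFinpartition.part H := fun a ha b hb hab => by
  rw [toFinpartition, part_ofFibers_eq_iff (mem_union_left T ha) (mem_union_left T hb),
    label_of_mem_left hHT d ha, label_of_mem_left hHT d hb] at hab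
  exact Sum.inr_injective hab

lemma mem_attached_iff (hHT : Disjoint H T) (d : Attachment H T) (hx : x ∈ T) :
    x ∈ d.1.1 ↔ ∃ h ∈ H, d.label x = d.label h := by
  constructor
  · intro hxA
    refine ⟨d.2.1 ⟨x, hxA⟩, (d.2.1 ⟨x, hxA⟩).2, ?_⟩
    rw [label_of_mem d hxA, label_of_mem_left hHT d (d.2.1 ⟨x, hxA⟩).2]
  · rintro ⟨h, hh, hxh⟩
    by_contra hxA
    rw [label_of_mem_sdiff hHT d (mem_sdiff.2 ⟨hx, hxA⟩), label_of_mem_left hHT d hh] at hxh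
    exact Sum.inl_ne_inr hxh

lemma toFinpartition_injective (hHT : Disjoint H T) :
    Function.Injective (toFinpartition : Attachment H T → Finpartition (H ∪ T)) := by
  intro d d' hdd'
  have hlabel : ∀ a ∈ H ∪ T, ∀ b ∈ H ∪ T, d.label a = d.label b ↔ d'.label a = d'.label b :=
    fun a ha b hb => by
      rw [← part_ofFibers_eq_iff (φ := d.label) ha hb,
        ← part_ofFibers_eq_iff (φ := d'.label) ha hb]
      exact Iff.of_eq (congrArg (fun P => P.part a = P.part b) hdd')
  have hA : d.1.1 = d'.1.1 := by
    ext x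
    by_cases hx : x ∈ T
    · rw [mem_attached_iff hHT d hx, mem_attached_iff hHT d' hx]
      exact exists_congr fun h => and_congr_right fun hh =>
        hlabel x (mem_union_right H hx) h (mem_union_left T hh)
    · exact iff_of_false (fun h => hx (mem_powerset.1 d.1.2 h))
        (fun h => hx (mem_powerset.1 d'.1.2 h))
  obtain ⟨⟨A, hAT⟩, f, Q⟩ := d
  obtain ⟨⟨A', hAT'⟩, f', Q'⟩ := d'
  obtain rfl : A = A' := hA
  have hf : f = f' := funext fun x => by
    have := (hlabel x (mem_union_right H (mem_powerset.1 hAT x.2)) (f x)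
      (mem_union_left T (f x).2)).1 (by
        rw [label_of_mem _ x.2, label_of_mem_left hHT _ (f x).2])
    rw [label_of_mem _ x.2, label_of_mem_left hHT _ (f x).2] at this
    exact Subtype.ext (Sum.inr_injective this).symm
  have hQ : Q = Q' := ext_of_part_eq_part_iff fun a ha b hb => by
    have hlab := hlabel a (mem_union_right H (mem_sdiff.1 ha).1) b
      (mem_union_right H (mem_sdiff.1 hb).1)
    rwa [label_of_mem_sdiff hHT _ ha, label_of_mem_sdiff hHT _ hb, label_of_mem_sdiff hHT _ ha,
      label_of_mem_sdiff hHT _ hb, Sum.inl.injEq, Sum.inl.injEq] at hlab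
  rw [hf, hQ]

noncomputable def ofFinpartition (P : Finpartition (H ∪ T)) : Attachment H T :=
  ⟨⟨T.filter fun x => ∃ h ∈ H, P.part x = P.part h, mem_powerset.2 (filter_subset _ _)⟩,
    fun x => ⟨(mem_filter.1 x.2).2.choose, (mem_filter.1 x.2).2.choose_spec.1⟩,
    ofFibers _ P.part⟩

lemma label_ofFinpartition (hHT : Disjoint H T) (P : Finpartition (H ∪ T)) (hx : x ∈ H ∪ T) :
    (∃ h ∈ H, (ofFinpartition P).label x = .inr h ∧ P.part x = P.part h) ∨
      ((∀ h ∈ H, P.part x ≠ P.part h) ∧ x ∈ T \ (ofFinpartition P).1.1 ∧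
        (ofFinpartition P).label x = .inl ((ofFinpartition P).2.2.part x)) := by
  by_cases hxH : x ∈ H
  · exact .inl ⟨x, hxH, label_of_mem_left hHT _ hxH, rfl⟩
  have hxT : x ∈ T := (mem_union.1 hx).resolve_left hxH
  by_cases hxA : x ∈ (ofFinpartition P).1.1
  · have hspec := (mem_filter.1 hxA).2.choose_spec
    exact .inl ⟨_, hspec.1, label_of_mem _ hxA, hspec.2⟩
  · have hxA' : x ∈ T \ (ofFinpartition P).1.1 := mem_sdiff.2 ⟨hxT, hxA⟩
    exact .inr ⟨fun h hh hxh => hxA (mem_filter.2 ⟨hxT, h, hh, hxh⟩), hxA',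
      label_of_mem_sdiff hHT _ hxA'⟩

lemma toFinpartition_ofFinpartition (hHT : Disjoint H T) {P : Finpartition (H ∪ T)}
    (hP : Set.InjOn P.part H) : (ofFinpartition P).toFinpartition = P := by
  refine ext_of_part_eq_part_iff fun a ha b hb => ?_
  rw [toFinpartition, part_ofFibers_eq_iff ha hb]
  rcases label_ofFinpartition hHT P ha with ⟨g, hg, hag, hPa⟩ | ⟨hPa, haA, hag⟩ <;>
    rcases label_ofFinpartition hHT P hb with ⟨h, hh, hbh, hPb⟩ | ⟨hPb, hbA, hbh⟩ <;>
    rw [hag, hbh]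
  · rw [hPa, hPb, Sum.inr.injEq]
    exact ⟨fun hgh => hgh ▸ rfl, fun hgh => hP hg hh hgh⟩
  · exact iff_of_false Sum.inr_ne_inl fun hab => hPb g hg (hab ▸ hPa)
  · exact iff_of_false Sum.inl_ne_inr fun hab => hPa h hh (hab ▸ hPb)
  · rw [Sum.inl.injEq]
    exact part_ofFibers_eq_iff haA hbA

end Attachment

theorem Finpartition.card_injOn_part_eq_sum (hHT : Disjoint H T) :
    Nat.card {P : Finpartition (H ∪ T) // Set.InjOn P.part H} =
      ∑ A ∈ T.powerset, #H ^ #A * Nat.card (Finpartition (T \ A)) := by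
  have hbij : Function.Bijective fun d : Attachment H T =>
      (⟨d.toFinpartition, d.injOn_part_toFinpartition hHT⟩ :
        {P : Finpartition (H ∪ T) // Set.InjOn P.part H}) :=
    ⟨fun d d' h => Attachment.toFinpartition_injective hHT (congrArg Subtype.val h),
      fun P => ⟨Attachment.ofFinpartition P.1,
        Subtype.ext (Attachment.toFinpartition_ofFinpartition hHT P.2)⟩⟩
  rw [← Nat.card_eq_of_bijective _ hbij, Nat.card_sigma, ← sum_coe_sort T.powerset]
  refine sum_congr rfl fun A _ => ?_
  rw [Nat.card_prod, Nat.card_fun, Nat.card_eq_finsetCard, Nat.card_eq_finsetCard]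

lemma isHead_iff {N h : ℕ} (p : Finpartition (Icc 1 N)) :
    isHead p h ↔ h ∈ Icc 1 N ∧ ∀ t ∈ p.part h, h ≤ t := by
  constructor
  · rintro ⟨B, hB, hhB, hmin⟩
    rw [p.part_eq_of_mem hB hhB]
    exact ⟨p.le hB hhB, hmin⟩
  · rintro ⟨hh, hmin⟩
    exact ⟨p.part h, p.part_mem.2 hh, p.mem_part hh, hmin⟩

lemma forall_isHead_iff_injOn_part {m N : ℕ} (hmN : m ≤ N) (p : Finpartition (Icc 1 N)) :
    (∀ i, 1 ≤ i → i ≤ m → isHead p i) ↔ Set.InjOn p.part (Icc 1 m) := by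
  have hsub : ∀ {i}, i ∈ Icc 1 m → i ∈ Icc 1 N := fun hi => by
    simp only [mem_Icc] at hi ⊢
    omega
  have hmin : ∀ {i}, isHead p i → ∀ t ∈ p.part i, i ≤ t := fun hi => ((isHead_iff p).1 hi).2
  constructor
  · intro hhead a ha b hb hab
    have ha' := mem_Icc.1 ha
    have hb' := mem_Icc.1 hb
    have hab' : a ∈ p.part b := hab ▸ p.mem_part (hsub ha)
    have hba' : b ∈ p.part a := hab ▸ p.mem_part (hsub hb)
    exact le_antisymm (hmin (hhead a ha'.1 ha'.2) b hba') (hmin (hhead b hb'.1 hb'.2) a hab')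
  · intro hinj i hi1 him
    have hi : i ∈ Icc 1 m := mem_Icc.2 ⟨hi1, him⟩
    refine (isHead_iff p).2 ⟨hsub hi, fun t ht => ?_⟩
    have htN : t ∈ Icc 1 N := p.part_subset i ht
    by_contra! hti
    have htm : t ∈ Icc 1 m := by
      simp only [mem_Icc] at hi htN ⊢
      omega
    exact hti.ne (hinj htm hi ((p.mem_part_iff_part_eq_part htN (hsub hi)).1 ht))

theorem headCount_eq_sum_choose_bell (m n : ℕ) :
    headCount m (m + n) = ∑ i ∈ Finset.range (n + 1), n.choose i * m ^ i * bell (n - i) := by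
  have hsplit : Icc 1 (m + n) = Icc 1 m ∪ Icc (m + 1) (m + n) := by
    ext x
    simp only [mem_union, mem_Icc]
    omega
  have hdisj : Disjoint (Icc 1 m) (Icc (m + 1) (m + n)) :=
    disjoint_left.2 fun x hx hx' => by
      simp only [mem_Icc] at hx hx'
      omega
  have hT : #(Icc (m + 1) (m + n)) = n := by simp
  calc headCount m (m + n)
      = Nat.card {p : Finpartition (Icc 1 (m + n)) // Set.InjOn p.part (Icc 1 m)} :=
        Nat.card_congr (Equiv.subtypeEquivRight fun p =>
          forall_isHead_iff_injOn_part (Nat.le_add_right m n) p)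
    _ = ∑ A ∈ (Icc (m + 1) (m + n)).powerset, m ^ #A * bell (n - #A) := by
        rw [hsplit, card_injOn_part_eq_sum hdisj]
        refine sum_congr rfl fun A hA => ?_
        rw [card_eq_bell, card_sdiff_of_subset (mem_powerset.1 hA), hT, Nat.card_Icc,
          Nat.add_sub_cancel]
    _ = _ := by
        rw [sum_powerset_apply_card fun i => m ^ i * bell (n - i), hT]
        simp only [smul_eq_mul, mul_assoc]
end

section
/- For n ≥ 1, the number of noncrossing partitions of [n] equals the number of plane unary-binary trees with n vertices in which every left child has at least one of a left child or a right child (i.e., no left child is a leaf or has only a middle child). -/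
/-- Plane unary-binary trees: each non-leaf vertex has a middle child only,
a left child only, a right child only, or both left and right children. -/
inductive PUB : Type
  | leaf : PUB
  | middle (t : PUB) : PUB
  | left (t : PUB) : PUB
  | right (t : PUB) : PUB
  | both (l r : PUB) : PUB

/-- number of vertices -/
def PUB.size : PUB → ℕ
  | .leaf => 1
  | .middle t => t.size + 1
  | .left t => t.size + 1
  | .right t => t.size + 1
  | .both l r => l.size + r.size + 1

/-- the root has a left child or a right child -/
def PUB.hasLR : PUB → Prop
  | .left _ => True
  | .right _ => True
  | .both _ _ => True
  | _ => False

/-- every left child in the tree has a left or right child -/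
def PUB.good : PUB → Prop
  | .leaf => True
  | .middle t => t.good
  | .left t => t.good ∧ t.hasLR
  | .right t => t.good
  | .both l r => l.good ∧ r.good ∧ l.hasLR

/-- number of leaves -/
def PUB.leaves : PUB → ℕ
  | .leaf => 1
  | .middle t => t.leaves
  | .left t => t.leaves
  | .right t => t.leaves
  | .both l r => l.leaves + r.leaves

/-- number of vertices having a middle child -/
def PUB.middles : PUB → ℕ
  | .leaf => 0
  | .middle t => t.middles + 1
  | .left t => t.middles
  | .right t => t.middles
  | .both l r => l.middles + r.middles

/-- `p` is noncrossing: no standard edges `(i1,j1)`, `(i2,j2)` with `i1<i2<j1<j2`. -/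
def noncrossing {n : ℕ} (p : Finpartition (Finset.Icc 1 n : Finset ℕ)) : Prop :=
  ¬ ∃ i1 j1 i2 j2, stdEdge p i1 j1 ∧ stdEdge p i2 j2 ∧ i1 < i2 ∧ i2 < j1 ∧ j1 < j2

/-!
The standard edges of a set partition of `[n]` (pairs of consecutive elements of a block) form an
arc diagram: arcs `(i, j)` with `i < j`, no two sharing a left end or a right end. Conversely each
block of such a diagram is a chain of arcs, so its connected components form a partition whose
standard edges are exactly the arcs, and the partition is noncrossing iff the diagram is.

A noncrossing diagram on `[n]`, `n ≥ 2`, is read as a tree from the point `1`: no arc from `1`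
gives a middle child (delete `1`), the arc `(1, 2)` a right child (delete `1`), and an arc `(1, j)`
with `j > 2` gives a left child when `2` is isolated (delete `2`), and otherwise a left child from
the diagram under the arc and a right child from the diagram on `j, …, n`. In the last two cases
the left child's diagram has an arc from its first point, which is exactly the condition imposed
on left children.
-/

open Finset Relation

lemma Finpartition.eq_of_forall_part_eq {α : Type*} [DecidableEq α] {s : Finset α}
    {P Q : Finpartition s} (h : ∀ a ∈ s, P.part a = Q.part a) : P = Q := by
  have key : ∀ {P Q : Finpartition s}, (∀ a ∈ s, P.part a = Q.part a) → P.parts ⊆ Q.parts := by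
    intro P Q h B hB
    obtain ⟨a, ha, rfl⟩ := P.part_surjOn hB
    exact h a ha ▸ Q.part_mem.2 ha
  exact Finpartition.ext (subset_antisymm (key h) (key fun a ha => (h a ha).symm))

namespace Noncrossing

abbrev Arcs := Finset (ℕ × ℕ)

structure IsArcDiagram (n : ℕ) (E : Arcs) : Prop where
  bounds : ∀ a ∈ E, 1 ≤ a.1 ∧ a.1 < a.2 ∧ a.2 ≤ n
  injOn_fst : Set.InjOn Prod.fst (E : Set (ℕ × ℕ))
  injOn_snd : Set.InjOn Prod.snd (E : Set (ℕ × ℕ))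

structure IsNoncrossingDiagram (n : ℕ) (E : Arcs) : Prop extends IsArcDiagram n E where
  noncrossing : ∀ a ∈ E, ∀ b ∈ E, ¬ (a.1 < b.1 ∧ b.1 < a.2 ∧ a.2 < b.2)

def IsArc (E : Arcs) (i j : ℕ) : Prop := (i, j) ∈ E

namespace IsArcDiagram

variable {n : ℕ} {E : Arcs}

lemma le_of_reflTransGen (hE : IsArcDiagram n E) {x y : ℕ} (h : ReflTransGen (IsArc E) x y) :
    x ≤ y := by
  induction h with
  | refl => rfl
  | tail _ hyz ih => exact ih.trans (hE.bounds _ hyz).2.1.le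

lemma exists_common_source (hE : IsArcDiagram n E) {x y : ℕ}
    (h : ReflTransGen (SymmGen (IsArc E)) x y) :
    ∃ z, ReflTransGen (IsArc E) z x ∧ ReflTransGen (IsArc E) z y := by
  induction h with
  | refl => exact ⟨x, .refl, .refl⟩
  | @tail w y _ hwy ih =>
    obtain ⟨z, hzx, hzw⟩ := ih
    rcases hwy with hwy | hyw
    · exact ⟨z, hzx, hzw.tail hwy⟩
    · rcases hzw.cases_tail with rfl | ⟨c, hzc, hcw⟩
      · exact ⟨y, hzx.head hyw, .refl⟩
      · obtain rfl : c = y := congrArg Prod.fst (hE.injOn_snd hcw hyw rfl)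
        exact ⟨z, hzx, hzc⟩

lemma exists_arc_le (hE : IsArcDiagram n E) {x y : ℕ} (h : EqvGen (IsArc E) x y) (hxy : x < y) :
    ∃ c, (x, c) ∈ E ∧ c ≤ y := by
  rw [← EqvGen.reflTransGen_symmGen] at h
  obtain ⟨z, hzx, hzy⟩ := hE.exists_common_source h
  have hdet : Relator.RightUnique (IsArc E) := fun a b c hab hac =>
    congrArg Prod.snd (hE.injOn_fst hab hac rfl)
  rcases ReflTransGen.total_of_right_unique hdet hzx hzy with hxy' | hyx
  · rcases hxy'.cases_head with rfl | ⟨c, hxc, hcy⟩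
    · exact absurd hxy (lt_irrefl x)
    · exact ⟨c, hxc, hE.le_of_reflTransGen hcy⟩
  · exact absurd (hE.le_of_reflTransGen hyx) (not_le.2 hxy)

end IsArcDiagram

section Partitions

variable {n : ℕ}

lemma stdEdge_iff_mem_part {p : Finpartition (Icc 1 n)} {i j : ℕ} :
    stdEdge p i j ↔ i ∈ Icc 1 n ∧ i < j ∧ j ∈ p.part i ∧ ∀ t ∈ p.part i, ¬ (i < t ∧ t < j) := by
  constructor
  · rintro ⟨hij, B, hB, hi, hj, hgap⟩
    rw [p.part_eq_of_mem hB hi]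
    exact ⟨p.le hB hi, hij, hj, hgap⟩
  · rintro ⟨hi, hij, hj, hgap⟩
    exact ⟨hij, p.part i, p.part_mem.2 hi, p.mem_part hi, hj, hgap⟩

open Classical in
noncomputable def arcsOf (p : Finpartition (Icc 1 n)) : Arcs :=
  (Icc 1 n ×ˢ Icc 1 n).filter fun a => stdEdge p a.1 a.2

lemma mem_arcsOf {p : Finpartition (Icc 1 n)} {a : ℕ × ℕ} : a ∈ arcsOf p ↔ stdEdge p a.1 a.2 := by
  classical
  rw [arcsOf, mem_filter, mem_product, and_iff_right_iff_imp]
  rintro ⟨-, B, hB, hi, hj, -⟩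
  exact ⟨p.le hB hi, p.le hB hj⟩

lemma isArcDiagram_arcsOf (p : Finpartition (Icc 1 n)) : IsArcDiagram n (arcsOf p) := by
  refine ⟨fun a ha => ?_, fun a ha b hb hab => ?_, fun a ha b hb hab => ?_⟩
  · obtain ⟨hi, hij, hj, -⟩ := stdEdge_iff_mem_part.1 (mem_arcsOf.1 ha)
    have := mem_Icc.1 (p.part_subset _ hj)
    exact ⟨(mem_Icc.1 hi).1, hij, this.2⟩
  · obtain ⟨-, hij, hj, hgap⟩ := stdEdge_iff_mem_part.1 (mem_arcsOf.1 ha)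
    obtain ⟨-, hij', hj', hgap'⟩ := stdEdge_iff_mem_part.1 (mem_arcsOf.1 hb)
    rw [← hab] at hij' hj' hgap'
    refine Prod.ext hab (le_antisymm ?_ ?_)
    · exact not_lt.1 fun h => hgap _ hj' ⟨hij', h⟩
    · exact not_lt.1 fun h => hgap' _ hj ⟨hij, h⟩
  · obtain ⟨hi, hij, hj, hgap⟩ := stdEdge_iff_mem_part.1 (mem_arcsOf.1 ha)
    obtain ⟨hi', hij', hj', hgap'⟩ := stdEdge_iff_mem_part.1 (mem_arcsOf.1 hb)
    rw [← hab] at hij' hj'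
    have hpart : p.part a.1 = p.part b.1 := by
      rw [← p.part_eq_of_mem (p.part_mem.2 hi) hj, p.part_eq_of_mem (p.part_mem.2 hi') hj']
    have ha' : a.1 ∈ p.part b.1 := hpart ▸ p.mem_part hi
    have hb' : b.1 ∈ p.part a.1 := hpart ▸ p.mem_part hi'
    refine Prod.ext (le_antisymm ?_ ?_) hab
    · exact not_lt.1 fun h => hgap' _ ha' ⟨h, hab ▸ hij⟩
    · exact not_lt.1 fun h => hgap _ hb' ⟨h, hij'⟩

lemma noncrossing_iff_isNoncrossingDiagram (p : Finpartition (Icc 1 n)) :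
    noncrossing p ↔ IsNoncrossingDiagram n (arcsOf p) := by
  refine ⟨fun hp => ⟨isArcDiagram_arcsOf p, fun a ha b hb hab => ?_⟩, fun hp => ?_⟩
  · exact hp ⟨a.1, a.2, b.1, b.2, mem_arcsOf.1 ha, mem_arcsOf.1 hb, hab⟩
  · rintro ⟨i, j, i', j', h, h', hcross⟩
    exact hp.noncrossing (i, j) (mem_arcsOf.2 h) (i', j') (mem_arcsOf.2 h') hcross

lemma eqvGen_of_mem_part (p : Finpartition (Icc 1 n)) {a b : ℕ} (ha : a ∈ p.part b)
    (hab : a ≤ b) : EqvGen (IsArc (arcsOf p)) a b := by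
  induction b using Nat.strong_induction_on generalizing a with
  | _ b ih =>
  rcases hab.eq_or_lt with rfl | hab
  · exact .refl a
  have hb : b ∈ Icc 1 n := p.part_nonempty.1 ⟨a, ha⟩
  have hne : ((p.part b).filter (· < b)).Nonempty := ⟨a, mem_filter.2 ⟨ha, hab⟩⟩
  set c := ((p.part b).filter (· < b)).max' hne
  obtain ⟨hc, hcb⟩ := mem_filter.1 (max'_mem _ hne)
  have hci : p.part c = p.part b := p.part_eq_of_mem (p.part_mem.2 hb) hc
  have hedge : stdEdge p c b := by
    refine stdEdge_iff_mem_part.2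
      ⟨p.part_subset b hc, hcb, hci ▸ p.mem_part hb, fun t ht ⟨hct, htb⟩ => ?_⟩
    exact (le_max' _ t (mem_filter.2 ⟨hci ▸ ht, htb⟩)).not_gt hct
  refine .trans _ c _ (ih c hcb (hci ▸ ha) ?_) (.rel _ _ (mem_arcsOf.2 hedge))
  exact le_max' _ a (mem_filter.2 ⟨ha, hab⟩)

lemma mem_part_iff_eqvGen (p : Finpartition (Icc 1 n)) {a b : ℕ} (ha : a ∈ Icc 1 n) :
    b ∈ p.part a ↔ EqvGen (IsArc (arcsOf p)) a b := by
  refine ⟨fun hb => ?_, fun h => ?_⟩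
  · have hpart : p.part b = p.part a := p.part_eq_of_mem (p.part_mem.2 ha) hb
    rcases le_total a b with hab | hba
    · exact eqvGen_of_mem_part p (hpart ▸ p.mem_part ha) hab
    · exact .symm _ _ (eqvGen_of_mem_part p hb hba)
  · have hpart : p.part a = p.part b := by
      clear ha
      induction h with
      | rel a b hab =>
        obtain ⟨ha, -, hb, -⟩ := stdEdge_iff_mem_part.1 (mem_arcsOf.1 hab)
        exact (p.part_eq_of_mem (p.part_mem.2 ha) hb).symm
      | refl => rfl
      | symm _ _ _ ih => exact ih.symm
      | trans _ _ _ _ _ ih ih' => exact ih.trans ih'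
    exact hpart ▸ p.mem_part (p.part_nonempty.1 (hpart ▸ ⟨a, p.mem_part ha⟩))

noncomputable def ofArcs (E : Arcs) : Finpartition (Icc 1 n) :=
  haveI := Classical.decRel (EqvGen (IsArc E))
  Finpartition.ofSetSetoid (EqvGen.setoid (IsArc E)) (Icc 1 n)

lemma mem_part_ofArcs {E : Arcs} {a b : ℕ} :
    b ∈ (ofArcs E : Finpartition (Icc 1 n)).part a ↔
      a ∈ Icc 1 n ∧ b ∈ Icc 1 n ∧ EqvGen (IsArc E) a b := by
  classical
  exact Finpartition.mem_part_ofSetSetoid_iff_rel _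

lemma ofArcs_arcsOf (p : Finpartition (Icc 1 n)) : ofArcs (arcsOf p) = p := by
  refine Finpartition.eq_of_forall_part_eq fun a ha => Finset.ext fun b => ?_
  rw [mem_part_ofArcs, mem_part_iff_eqvGen p ha]
  exact ⟨fun h => h.2.2, fun h => ⟨ha, p.part_subset a ((mem_part_iff_eqvGen p ha).2 h), h⟩⟩

lemma arcsOf_ofArcs {E : Arcs} (hE : IsArcDiagram n E) : arcsOf (ofArcs (n := n) E) = E := by
  ext ⟨i, j⟩
  rw [mem_arcsOf, stdEdge_iff_mem_part, mem_part_ofArcs]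
  constructor
  · rintro ⟨hi, hij, ⟨-, hj, hconn⟩, hgap⟩
    obtain ⟨c, hic, hcj⟩ := hE.exists_arc_le hconn hij
    obtain ⟨-, hic', hcn⟩ := hE.bounds _ hic
    have hc : c ∈ Icc 1 n := mem_Icc.2 ⟨by omega, hcn⟩
    obtain rfl : c = j := hcj.eq_of_not_lt fun hcj =>
      hgap c (mem_part_ofArcs.2 ⟨hi, hc, .rel _ _ hic⟩) ⟨hic', hcj⟩
    exact hic
  · intro hij
    obtain ⟨hi, hij', hjn⟩ := hE.bounds _ hij
    refine ⟨mem_Icc.2 ⟨hi, by omega⟩, hij', ⟨mem_Icc.2 ⟨hi, by omega⟩, mem_Icc.2 ⟨by omega, hjn⟩,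
      .rel _ _ hij⟩, fun t ht ⟨hit, htj⟩ => ?_⟩
    obtain ⟨c, hic, hct⟩ := hE.exists_arc_le (mem_part_ofArcs.1 ht).2.2 hit
    obtain rfl : c = j := congrArg Prod.snd (hE.injOn_fst hic hij rfl)
    omega

lemma noncrossing_ofArcs {E : Arcs} (hE : IsNoncrossingDiagram n E) :
    noncrossing (ofArcs (n := n) E) := by
  rw [noncrossing_iff_isNoncrossingDiagram, arcsOf_ofArcs hE.toIsArcDiagram]
  exact hE

noncomputable def partitionEquivDiagram :
    {p : Finpartition (Icc 1 n) // noncrossing p} ≃ {E : Arcs // IsNoncrossingDiagram n E} where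
  toFun p := ⟨arcsOf p.1, (noncrossing_iff_isNoncrossingDiagram p.1).1 p.2⟩
  invFun E := ⟨ofArcs E.1, noncrossing_ofArcs E.2⟩
  left_inv p := Subtype.ext (ofArcs_arcsOf p.1)
  right_inv E := Subtype.ext (arcsOf_ofArcs (n := n) E.2.toIsArcDiagram)

end Partitions

def relabel (f : ℕ → ℕ) (E : Arcs) : Arcs := E.image (Prod.map f f)

section Relabel

variable {f g : ℕ → ℕ} {E : Arcs}

lemma mem_relabel {b : ℕ × ℕ} : b ∈ relabel f E ↔ ∃ a ∈ E, (f a.1, f a.2) = b := by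
  simp [relabel, Prod.map]

lemma mem_relabel_of_mem {a : ℕ × ℕ} (ha : a ∈ E) : (f a.1, f a.2) ∈ relabel f E :=
  mem_relabel.2 ⟨a, ha, rfl⟩

lemma relabel_relabel : relabel g (relabel f E) = relabel (g ∘ f) E := by
  simp only [relabel, image_image, Prod.map_comp_map]

lemma relabel_eq_self (h : ∀ a ∈ E, f a.1 = a.1 ∧ f a.2 = a.2) : relabel f E = E := by
  conv_rhs => rw [← image_id (s := E)]
  exact image_congr fun a ha => Prod.ext (h a ha).1 (h a ha).2

lemma relabel_sub_add (k : ℕ) (E : Arcs) : relabel (· - k) (relabel (· + k) E) = E := by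
  rw [relabel_relabel]
  exact relabel_eq_self fun a _ => by simp

lemma relabel_add_sub {k : ℕ} (h : ∀ a ∈ E, k ≤ a.1 ∧ k ≤ a.2) :
    relabel (· + k) (relabel (· - k) E) = E := by
  rw [relabel_relabel]
  exact relabel_eq_self fun a ha =>
    ⟨Nat.sub_add_cancel (h a ha).1, Nat.sub_add_cancel (h a ha).2⟩

end Relabel

namespace IsNoncrossingDiagram

variable {n : ℕ} {E : Arcs}

lemma relabel {m : ℕ} {f : ℕ → ℕ} {S : Set ℕ} (hE : IsNoncrossingDiagram n E)
    (hS : ∀ a ∈ E, a.1 ∈ S ∧ a.2 ∈ S) (hf : StrictMonoOn f S)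
    (hbd : ∀ a ∈ E, 1 ≤ f a.1 ∧ f a.2 ≤ m) : IsNoncrossingDiagram m (relabel f E) := by
  have lt_iff {a b : ℕ × ℕ} (ha : a ∈ E) (hb : b ∈ E) :
      (f a.1 < f b.1 ↔ a.1 < b.1) ∧ (f a.1 < f b.2 ↔ a.1 < b.2) ∧ (f a.2 < f b.2 ↔ a.2 < b.2) :=
    ⟨hf.lt_iff_lt (hS a ha).1 (hS b hb).1, hf.lt_iff_lt (hS a ha).1 (hS b hb).2,
      hf.lt_iff_lt (hS a ha).2 (hS b hb).2⟩
  refine ⟨⟨fun b hb => ?_, fun b hb b' hb' h => ?_, fun b hb b' hb' h => ?_⟩, fun b hb b' hb' => ?_⟩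
  · obtain ⟨a, ha, rfl⟩ := mem_relabel.1 hb
    exact ⟨(hbd a ha).1, (lt_iff ha ha).2.1.2 (hE.bounds a ha).2.1, (hbd a ha).2⟩
  · obtain ⟨a, ha, rfl⟩ := mem_relabel.1 (mem_coe.1 hb)
    obtain ⟨a', ha', rfl⟩ := mem_relabel.1 (mem_coe.1 hb')
    rw [hE.injOn_fst ha ha' (hf.injOn (hS a ha).1 (hS a' ha').1 h)]
  · obtain ⟨a, ha, rfl⟩ := mem_relabel.1 (mem_coe.1 hb)
    obtain ⟨a', ha', rfl⟩ := mem_relabel.1 (mem_coe.1 hb')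
    rw [hE.injOn_snd ha ha' (hf.injOn (hS a ha).2 (hS a' ha').2 h)]
  · obtain ⟨a, ha, rfl⟩ := mem_relabel.1 hb
    obtain ⟨a', ha', rfl⟩ := mem_relabel.1 hb'
    simp only
    rw [(lt_iff ha ha').1, (lt_iff ha' ha).2.1, (lt_iff ha ha').2.2]
    exact hE.noncrossing a ha a' ha'

lemma shiftUp (hE : IsNoncrossingDiagram n E) (k : ℕ) :
    IsNoncrossingDiagram (n + k) (Noncrossing.relabel (· + k) E) :=
  hE.relabel (S := Set.univ) (fun _ _ => ⟨trivial, trivial⟩)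
    (fun _ _ _ _ h => Nat.add_lt_add_right h k)
    (fun a ha => by have := hE.bounds a ha; omega)

lemma shiftDown {m k : ℕ} (hE : IsNoncrossingDiagram n E) (hk : ∀ a ∈ E, k < a.1 ∧ a.2 ≤ m + k) :
    IsNoncrossingDiagram m (Noncrossing.relabel (· - k) E) :=
  hE.relabel (S := Set.Ioi k)
    (fun a ha => by have := hE.bounds a ha; have := hk a ha; simp only [Set.mem_Ioi]; omega)
    (fun i hi j hj h => by simp only [Set.mem_Ioi] at hi hj; omega)
    (fun a ha => by have := hE.bounds a ha; have := hk a ha; omega)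

lemma mono {E' : Arcs} (hE : IsNoncrossingDiagram n E) (h : E' ⊆ E) : IsNoncrossingDiagram n E' :=
  ⟨⟨fun a ha => hE.bounds a (h ha), hE.injOn_fst.mono (coe_subset.2 h),
    hE.injOn_snd.mono (coe_subset.2 h)⟩, fun a ha b hb => hE.noncrossing a (h ha) b (h hb)⟩

lemma union {F : Arcs} (hE : IsNoncrossingDiagram n E) (hF : IsNoncrossingDiagram n F)
    (hEF : ∀ a ∈ E, ∀ b ∈ F, a.2 < b.1) : IsNoncrossingDiagram n (E ∪ F) := by
  have hbd : ∀ a ∈ E ∪ F, 1 ≤ a.1 ∧ a.1 < a.2 ∧ a.2 ≤ n := fun a ha =>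
    (mem_union.1 ha).elim (hE.bounds a) (hF.bounds a)
  have cases : ∀ a ∈ E ∪ F, ∀ b ∈ E ∪ F,
      (a ∈ E ∧ b ∈ E) ∨ (a ∈ F ∧ b ∈ F) ∨ a.2 < b.1 ∨ b.2 < a.1 := by
    intro a ha b hb
    rcases mem_union.1 ha with ha | ha <;> rcases mem_union.1 hb with hb | hb
    exacts [.inl ⟨ha, hb⟩, .inr (.inr (.inl (hEF a ha b hb))),
      .inr (.inr (.inr (hEF b hb a ha))), .inr (.inl ⟨ha, hb⟩)]
  refine ⟨⟨hbd, fun a ha b hb h => ?_, fun a ha b hb h => ?_⟩, fun a ha b hb => ?_⟩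
  · rcases cases a ha b hb with ⟨ha, hb⟩ | ⟨ha, hb⟩ | hab | hab
    · exact hE.injOn_fst ha hb h
    · exact hF.injOn_fst ha hb h
    all_goals have := hbd a ha; have := hbd b hb; omega
  · rcases cases a ha b hb with ⟨ha, hb⟩ | ⟨ha, hb⟩ | hab | hab
    · exact hE.injOn_snd ha hb h
    · exact hF.injOn_snd ha hb h
    all_goals have := hbd a ha; have := hbd b hb; omega
  · rcases cases a ha b hb with ⟨ha, hb⟩ | ⟨ha, hb⟩ | hab | hab
    · exact hE.noncrossing a ha b hb
    · exact hF.noncrossing a ha b hb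
    all_goals have := hbd a ha; have := hbd b hb; omega

lemma insert (hE : IsNoncrossingDiagram n E) {i j : ℕ} (hij : 1 ≤ i ∧ i < j ∧ j ≤ n)
    (h : ∀ a ∈ E, a.1 ≠ i ∧ a.2 ≠ j ∧ ¬ (a.1 < i ∧ i < a.2 ∧ a.2 < j) ∧
      ¬ (i < a.1 ∧ a.1 < j ∧ j < a.2)) :
    IsNoncrossingDiagram n (Insert.insert (i, j) E) := by
  have cases : ∀ a ∈ Insert.insert (i, j) E, a = (i, j) ∨ a ∈ E := fun a ha => mem_insert.1 ha
  refine ⟨⟨fun a ha => ?_, fun a ha b hb hab => ?_, fun a ha b hb hab => ?_⟩, fun a ha b hb => ?_⟩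
  · rcases cases a ha with rfl | ha
    exacts [hij, hE.bounds a ha]
  · rcases cases a ha with rfl | ha <;> rcases cases b hb with rfl | hb
    · rfl
    · exact absurd hab.symm (h b hb).1
    · exact absurd hab (h a ha).1
    · exact hE.injOn_fst ha hb hab
  · rcases cases a ha with rfl | ha <;> rcases cases b hb with rfl | hb
    · rfl
    · exact absurd hab.symm (h b hb).2.1
    · exact absurd hab (h a ha).2.1
    · exact hE.injOn_snd ha hb hab
  · rcases cases a ha with rfl | ha <;> rcases cases b hb with rfl | hb
    · simp
    · exact (h b hb).2.2.2
    · exact (h a ha).2.2.1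
    · exact hE.noncrossing a ha b hb

lemma of_le {m : ℕ} (hE : IsNoncrossingDiagram n E) (hnm : n ≤ m) : IsNoncrossingDiagram m E :=
  ⟨⟨fun a ha => by have := hE.bounds a ha; omega, hE.injOn_fst, hE.injOn_snd⟩, hE.noncrossing⟩

lemma bounds_of_mem_shiftUp (hE : IsNoncrossingDiagram n E) {k : ℕ} {a : ℕ × ℕ}
    (ha : a ∈ Noncrossing.relabel (· + k) E) : k + 1 ≤ a.1 ∧ a.1 < a.2 ∧ a.2 ≤ n + k := by
  obtain ⟨b, hb, rfl⟩ := mem_relabel.1 ha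
  have := hE.bounds b hb
  simp only
  omega

lemma snd_lt_of_fst_lt (hE : IsNoncrossingDiagram n E) {j : ℕ} (h1j : (1, j) ∈ E) {a : ℕ × ℕ}
    (ha : a ∈ E) (h1 : 1 < a.1) (haj : a.1 < j) : a.2 < j := by
  refine lt_of_le_of_ne (not_lt.1 fun h => hE.noncrossing _ h1j a ha ⟨h1, haj, h⟩) fun h => ?_
  have := congrArg Prod.fst (hE.injOn_snd ha h1j h)
  omega

lemma insert_filter_union_filter (hE : IsNoncrossingDiagram n E) {j : ℕ} (h1j : (1, j) ∈ E) :
    Insert.insert (1, j) (E.filter (fun a => 1 < a.1 ∧ a.1 < j) ∪ E.filter (fun a => j ≤ a.1)) =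
      E := by
  refine subset_antisymm (insert_subset h1j (union_subset (filter_subset _ _)
    (filter_subset _ _))) fun a ha => ?_
  rw [mem_insert, mem_union, mem_filter, mem_filter]
  by_cases h1 : a.1 = 1
  · exact .inl (hE.injOn_fst ha h1j h1)
  · have := hE.bounds a ha
    by_cases haj : a.1 < j
    exacts [.inr (.inl ⟨ha, by omega, haj⟩), .inr (.inr ⟨ha, by omega⟩)]

end IsNoncrossingDiagram

lemma isNoncrossingDiagram_empty (n : ℕ) : IsNoncrossingDiagram n ∅ := by
  refine ⟨⟨?_, ?_, ?_⟩, ?_⟩ <;> simp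

def skip (k i : ℕ) : ℕ := if i < k then i else i + 1

def unskip (k i : ℕ) : ℕ := if i < k then i else i - 1

lemma strictMono_skip (k : ℕ) : StrictMono (skip k) := by
  intro i j h
  unfold skip
  split_ifs <;> omega

lemma strictMonoOn_unskip (k : ℕ) : StrictMonoOn (unskip k) {i | i ≠ k} := by
  intro i hi j hj h
  simp only [ne_eq, Set.mem_ofPred_eq] at hi hj
  unfold unskip
  split_ifs <;> omega

lemma unskip_skip (k i : ℕ) : unskip k (skip k i) = i := by
  unfold skip unskip
  split_ifs <;> omega

lemma skip_unskip {k i : ℕ} (h : i ≠ k) : skip k (unskip k i) = i := by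
  unfold skip unskip
  split_ifs <;> omega

lemma _root_.PUB.size_pos (t : PUB) : 0 < t.size := by
  cases t <;> simp [PUB.size]

def treeArcs : PUB → Arcs
  | .leaf => ∅
  | .middle t => relabel (· + 1) (treeArcs t)
  | .right t => insert (1, 2) (relabel (· + 1) (treeArcs t))
  | .left t => relabel (skip 2) (treeArcs t)
  | .both l r =>
    insert (1, l.size + 2) (relabel (· + 1) (treeArcs l) ∪ relabel (· + (l.size + 1)) (treeArcs r))

lemma isNoncrossingDiagram_treeArcs (t : PUB) : IsNoncrossingDiagram t.size (treeArcs t) := by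
  induction t with
  | leaf => exact isNoncrossingDiagram_empty _
  | middle t ih => exact ih.shiftUp 1
  | right t ih =>
    refine (ih.shiftUp 1).insert (by have := t.size_pos; omega) fun a ha => ?_
    have := ih.bounds_of_mem_shiftUp ha
    omega
  | left t ih =>
    refine ih.relabel (S := Set.univ) (fun _ _ => ⟨trivial, trivial⟩)
      ((strictMono_skip 2).strictMonoOn _) fun a ha => ?_
    have := ih.bounds a ha
    simp only [skip, PUB.size]
    split_ifs <;> omega
  | both l r ihl ihr =>
    have hr := r.size_pos
    have hL : IsNoncrossingDiagram (l.both r).size (relabel (· + 1) (treeArcs l)) :=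
      (ihl.shiftUp 1).of_le (by simp only [PUB.size]; omega)
    have hR : IsNoncrossingDiagram (l.both r).size (relabel (· + (l.size + 1)) (treeArcs r)) :=
      (ihr.shiftUp _).of_le (by simp only [PUB.size]; omega)
    refine (hL.union hR fun a ha b hb => ?_).insert (by simp only [PUB.size]; omega) fun a ha => ?_
    · have := ihl.bounds_of_mem_shiftUp ha
      have := ihr.bounds_of_mem_shiftUp hb
      omega
    · rcases mem_union.1 ha with ha | ha
      · have := ihl.bounds_of_mem_shiftUp ha
        omega
      · have := ihr.bounds_of_mem_shiftUp ha
        omega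

lemma hasLR_of_mem_treeArcs {t : PUB} {j : ℕ} (h : (1, j) ∈ treeArcs t) : t.hasLR := by
  cases t with
  | leaf => simp [treeArcs] at h
  | middle t =>
    have := (isNoncrossingDiagram_treeArcs t).bounds_of_mem_shiftUp h
    omega
  | _ => trivial

lemma exists_mem_treeArcs_of_hasLR {t : PUB} (hg : t.good) (ht : t.hasLR) :
    ∃ j, (1, j) ∈ treeArcs t := by
  induction t with
  | leaf | middle => exact ht.elim
  | right t => exact ⟨2, mem_insert_self _ _⟩
  | left t ih =>
    obtain ⟨j, hj⟩ := ih hg.1 hg.2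
    exact ⟨skip 2 j, mem_relabel_of_mem (f := skip 2) hj⟩
  | both l r => exact ⟨_, mem_insert_self _ _⟩

/-- The end of the arc starting at `i`, or `0` if there is none. -/
def arcFrom (i : ℕ) (E : Arcs) : ℕ := (E.filter (·.1 = i)).sup Prod.snd

lemma arcFrom_eq {E : Arcs} (hE : Set.InjOn Prod.fst (E : Set (ℕ × ℕ))) {i j : ℕ}
    (h : (i, j) ∈ E) : arcFrom i E = j := by
  have : E.filter (·.1 = i) = {(i, j)} := by
    refine eq_singleton_iff_unique_mem.2 ⟨mem_filter.2 ⟨h, rfl⟩, fun a ha => ?_⟩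
    obtain ⟨ha', rfl⟩ := mem_filter.1 ha
    exact hE ha' h rfl
  rw [arcFrom, this, sup_singleton]

lemma arcFrom_eq_zero {E : Arcs} {i : ℕ} (h : ∀ j, (i, j) ∉ E) : arcFrom i E = 0 := by
  rw [arcFrom, filter_false_of_mem fun a ha hai => h a.2 (hai ▸ ha), sup_empty]
  rfl

def decode (n : ℕ) (E : Arcs) : PUB :=
  if hn : n ≤ 1 then .leaf
  else if arcFrom 1 E = 0 then .middle (decode (n - 1) (relabel (· - 1) E))
  else if arcFrom 1 E = 2 then .right (decode (n - 1) (relabel (· - 1) (E.erase (1, 2))))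
  else if arcFrom 2 E = 0 then .left (decode (n - 1) (relabel (unskip 2) E))
  -- the guard holds for every noncrossing diagram; it only serves termination
  else if hj : 2 < arcFrom 1 E ∧ arcFrom 1 E ≤ n then
    .both (decode (arcFrom 1 E - 2)
        (relabel (· - 1) (E.filter fun a => 1 < a.1 ∧ a.1 < arcFrom 1 E)))
      (decode (n + 1 - arcFrom 1 E)
        (relabel (· - (arcFrom 1 E - 1)) (E.filter fun a => arcFrom 1 E ≤ a.1)))
  else .leaf
termination_by n
decreasing_by all_goals omega

lemma decode_treeArcs_right {t : PUB} (ih : decode t.size (treeArcs t) = t) :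
    decode t.right.size (treeArcs t.right) = t.right := by
  have ht := isNoncrossingDiagram_treeArcs t
  have h1 : arcFrom 1 (treeArcs t.right) = 2 :=
    arcFrom_eq (isNoncrossingDiagram_treeArcs t.right).injOn_fst (mem_insert_self _ _)
  have hnot : (1, 2) ∉ relabel (· + 1) (treeArcs t) := fun h => by
    have := ht.bounds_of_mem_shiftUp h
    omega
  rw [decode, dif_neg (by simp only [PUB.size]; have := t.size_pos; omega), h1,
    if_neg two_ne_zero, if_pos rfl]
  simp only [PUB.size, treeArcs, Nat.add_sub_cancel, erase_insert hnot, relabel_sub_add, ih]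

lemma decode_treeArcs_left {t : PUB} (hg : t.left.good) (ih : decode t.size (treeArcs t) = t) :
    decode t.left.size (treeArcs t.left) = t.left := by
  have ht := isNoncrossingDiagram_treeArcs t
  obtain ⟨j, hj⟩ := exists_mem_treeArcs_of_hasLR hg.1 hg.2
  have hj1 := (ht.bounds _ hj).2.1
  have h1 : arcFrom 1 (treeArcs t.left) = j + 1 := by
    refine arcFrom_eq (isNoncrossingDiagram_treeArcs t.left).injOn_fst
      (mem_relabel.2 ⟨_, hj, ?_⟩)
    simp only [skip]
    split_ifs <;> first | rfl | omega
  have h2 : arcFrom 2 (treeArcs t.left) = 0 := arcFrom_eq_zero fun k hk => by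
    obtain ⟨a, ha, hak⟩ := mem_relabel.1 hk
    have := ht.bounds a ha
    simp only [skip, Prod.mk.injEq] at hak
    split_ifs at hak <;> omega
  have hid : relabel (unskip 2) (treeArcs t.left) = treeArcs t := by
    rw [treeArcs, relabel_relabel]
    exact relabel_eq_self fun a _ => ⟨unskip_skip 2 a.1, unskip_skip 2 a.2⟩
  rw [decode, dif_neg (by simp only [PUB.size]; have := t.size_pos; omega), h1,
    if_neg (by omega), if_neg (by omega), if_pos h2]
  simp only [PUB.size, Nat.add_sub_cancel, hid, ih]

lemma decode_treeArcs_both {l r : PUB} (hg : (l.both r).good)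
    (ihl : decode l.size (treeArcs l) = l) (ihr : decode r.size (treeArcs r) = r) :
    decode (l.both r).size (treeArcs (l.both r)) = l.both r := by
  have hT := isNoncrossingDiagram_treeArcs (l.both r)
  have hl := isNoncrossingDiagram_treeArcs l
  have hr := isNoncrossingDiagram_treeArcs r
  have hlpos := l.size_pos
  have hrpos := r.size_pos
  obtain ⟨k, hk⟩ := exists_mem_treeArcs_of_hasLR hg.1 hg.2.2
  have h1 : arcFrom 1 (treeArcs (l.both r)) = l.size + 2 :=
    arcFrom_eq hT.injOn_fst (mem_insert_self _ _)
  have h2 : arcFrom 2 (treeArcs (l.both r)) = k + 1 :=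
    arcFrom_eq hT.injOn_fst (mem_insert_of_mem (mem_union_left _ (mem_relabel_of_mem hk)))
  have hin : (treeArcs (l.both r)).filter (fun a => 1 < a.1 ∧ a.1 < l.size + 2) =
      relabel (· + 1) (treeArcs l) := by
    rw [treeArcs, filter_insert, if_neg (by omega), filter_union,
      filter_true_of_mem fun a ha => by have := hl.bounds_of_mem_shiftUp ha; omega,
      filter_false_of_mem fun a ha => by have := hr.bounds_of_mem_shiftUp ha; omega, union_empty]
  have hout : (treeArcs (l.both r)).filter (fun a => l.size + 2 ≤ a.1) =
      relabel (· + (l.size + 1)) (treeArcs r) := by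
    rw [treeArcs, filter_insert, if_neg (by omega), filter_union,
      filter_false_of_mem fun a ha => by have := hl.bounds_of_mem_shiftUp ha; omega,
      filter_true_of_mem fun a ha => by have := hr.bounds_of_mem_shiftUp ha; omega, empty_union]
  rw [decode, dif_neg (by simp only [PUB.size]; omega), h1, h2, if_neg (by omega),
    if_neg (by omega), if_neg (by omega), dif_pos (by simp only [PUB.size]; omega), hin, hout]
  simp only [PUB.size, Nat.add_sub_cancel, show l.size + 2 - 1 = l.size + 1 from rfl,
    show l.size + r.size + 1 + 1 - (l.size + 2) = r.size by omega, relabel_sub_add, ihl, ihr]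

lemma decode_treeArcs {t : PUB} (hg : t.good) : decode t.size (treeArcs t) = t := by
  induction t with
  | leaf => simp [decode, PUB.size]
  | middle t ih =>
    have h1 : arcFrom 1 (treeArcs t.middle) = 0 := arcFrom_eq_zero fun j hj => by
      have := (isNoncrossingDiagram_treeArcs t).bounds_of_mem_shiftUp hj
      omega
    rw [decode, dif_neg (by simp only [PUB.size]; have := t.size_pos; omega), if_pos h1]
    simp only [PUB.size, treeArcs, Nat.add_sub_cancel, relabel_sub_add, ih hg]
  | right t ih => exact decode_treeArcs_right (ih hg)
  | left t ih => exact decode_treeArcs_left hg (ih hg.1)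
  | both l r ihl ihr => exact decode_treeArcs_both hg (ihl hg.1) (ihr hg.2.1)

def Decodes (n : ℕ) (E : Arcs) : Prop :=
  (decode n E).good ∧ (decode n E).size = n ∧ treeArcs (decode n E) = E

section DecodeCases

variable {n : ℕ} {E : Arcs} (hE : IsNoncrossingDiagram n E)
  (ih : ∀ m < n, ∀ {E' : Arcs}, IsNoncrossingDiagram m E' → 1 ≤ m → Decodes m E')
include hE ih

lemma decodes_of_no_arc_from_one (hn : 2 ≤ n) (h1 : ∀ j, (1, j) ∉ E) : Decodes n E := by
  have hk : ∀ a ∈ E, 1 < a.1 := fun a ha => by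
    have := hE.bounds a ha
    exact lt_of_le_of_ne this.1 fun h => h1 a.2 (h ▸ ha)
  obtain ⟨hg, hs, ht⟩ := ih (n - 1) (by omega)
    (hE.shiftDown fun a ha => ⟨hk a ha, by have := hE.bounds a ha; omega⟩) (by omega)
  rw [Decodes, decode, dif_neg (by omega), if_pos (arcFrom_eq_zero h1)]
  refine ⟨hg, by simp only [PUB.size, hs]; omega, ?_⟩
  rw [treeArcs, ht, relabel_add_sub fun a ha => ⟨(hk a ha).le, by have := hE.bounds a ha; omega⟩]

lemma decodes_of_arc_one_two (hn : 2 ≤ n) (h12 : (1, 2) ∈ E) : Decodes n E := by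
  have hk : ∀ a ∈ E.erase (1, 2), 1 < a.1 := fun a ha => by
    obtain ⟨hne, ha⟩ := mem_erase.1 ha
    have := hE.bounds a ha
    exact lt_of_le_of_ne this.1 fun h => hne (hE.injOn_fst ha h12 h.symm)
  obtain ⟨hg, hs, ht⟩ := ih (n - 1) (by omega)
    ((hE.mono (erase_subset _ _)).shiftDown fun a ha =>
      ⟨hk a ha, by have := hE.bounds a (mem_of_mem_erase ha); omega⟩) (by omega)
  rw [Decodes, decode, dif_neg (by omega), arcFrom_eq hE.injOn_fst h12, if_neg two_ne_zero,
    if_pos rfl]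
  refine ⟨hg, by simp only [PUB.size, hs]; omega, ?_⟩
  rw [treeArcs, ht, relabel_add_sub fun a ha => ⟨(hk a ha).le, by
    have := hE.bounds a (mem_of_mem_erase ha); have := hk a ha; omega⟩, insert_erase h12]

lemma decodes_of_no_arc_from_two {j : ℕ} (h1j : (1, j) ∈ E) (hj : 2 < j)
    (h2 : ∀ k, (2, k) ∉ E) : Decodes n E := by
  have hjn := (hE.bounds _ h1j).2.2
  have hS : ∀ a ∈ E, a.1 ∈ {i | i ≠ 2} ∧ a.2 ∈ {i | i ≠ 2} := fun a ha => by
    refine ⟨fun h => h2 a.2 (h ▸ ha), fun h => ?_⟩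
    have := hE.bounds a ha
    have : a = (1, j) := hE.injOn_fst ha h1j (by simp only; omega)
    simp_all
  have hE' : IsNoncrossingDiagram (n - 1) (relabel (unskip 2) E) := by
    refine hE.relabel hS (strictMonoOn_unskip 2) fun a ha => ?_
    have := hE.bounds a ha
    have := hS a ha
    simp only [unskip, ne_eq, Set.mem_ofPred_eq] at this ⊢
    split_ifs <;> omega
  obtain ⟨hg, hs, ht⟩ := ih (n - 1) (by omega) hE' (by omega)
  have hLR : (decode (n - 1) (relabel (unskip 2) E)).hasLR := by
    refine hasLR_of_mem_treeArcs (j := j - 1) ?_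
    rw [ht]
    refine mem_relabel.2 ⟨_, h1j, ?_⟩
    simp only [unskip]
    split_ifs <;> first | rfl | omega
  rw [Decodes, decode, dif_neg (by omega), arcFrom_eq hE.injOn_fst h1j, if_neg (by omega),
    if_neg (by omega), if_pos (arcFrom_eq_zero h2)]
  refine ⟨⟨hg, hLR⟩, by simp only [PUB.size, hs]; omega, ?_⟩
  rw [treeArcs, ht, relabel_relabel]
  exact relabel_eq_self fun a ha => ⟨skip_unskip (hS a ha).1, skip_unskip (hS a ha).2⟩

lemma decodes_of_arc_from_two {j k : ℕ} (h1j : (1, j) ∈ E) (hj : 2 < j) (h2k : (2, k) ∈ E) :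
    Decodes n E := by
  have hjn := (hE.bounds _ h1j).2.2
  have hk := hE.bounds _ h2k
  rw [Decodes, decode, dif_neg (by omega), arcFrom_eq hE.injOn_fst h1j,
    arcFrom_eq hE.injOn_fst h2k, if_neg (by omega), if_neg (by omega), if_neg (by omega),
    dif_pos ⟨hj, hjn⟩]
  set I := E.filter fun a => 1 < a.1 ∧ a.1 < j
  set O := E.filter fun a => j ≤ a.1
  have hI : ∀ a ∈ I, 1 < a.1 ∧ a.1 < a.2 ∧ a.2 < j := fun a ha => by
    obtain ⟨ha, h1, h2⟩ := mem_filter.1 ha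
    exact ⟨h1, (hE.bounds a ha).2.1, hE.snd_lt_of_fst_lt h1j ha h1 h2⟩
  have hO : ∀ a ∈ O, j ≤ a.1 ∧ a.1 < a.2 ∧ a.2 ≤ n := fun a ha =>
    ⟨(mem_filter.1 ha).2, (hE.bounds a (mem_of_mem_filter a ha)).2⟩
  have hI' : IsNoncrossingDiagram (j - 2) (relabel (· - 1) I) :=
    (hE.mono (filter_subset _ _)).shiftDown fun a ha => by have := hI a ha; omega
  have hO' : IsNoncrossingDiagram (n + 1 - j) (relabel (· - (j - 1)) O) :=
    (hE.mono (filter_subset _ _)).shiftDown fun a ha => by have := hO a ha; omega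
  obtain ⟨hgI, hsI, htI⟩ := ih (j - 2) (by omega) hI' (by omega)
  obtain ⟨hgO, hsO, htO⟩ := ih (n + 1 - j) (by omega) hO' (by omega)
  have hLR : (decode (j - 2) (relabel (· - 1) I)).hasLR := by
    refine hasLR_of_mem_treeArcs (j := k - 1) ?_
    rw [htI]
    exact mem_relabel_of_mem (f := (· - 1)) (mem_filter.2 ⟨h2k, by omega, by omega⟩)
  refine ⟨⟨hgI, hgO, hLR⟩, by simp only [PUB.size, hsI, hsO]; omega, ?_⟩
  rw [treeArcs, htI, htO, hsI, show j - 2 + 2 = j by omega, show j - 2 + 1 = j - 1 by omega,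
    relabel_add_sub fun a ha => by have := hI a ha; omega,
    relabel_add_sub fun a ha => by have := hO a ha; omega, hE.insert_filter_union_filter h1j]

end DecodeCases

theorem IsNoncrossingDiagram.decodes {n : ℕ} {E : Arcs} (hE : IsNoncrossingDiagram n E)
    (hn : 1 ≤ n) : Decodes n E := by
  induction n using Nat.strong_induction_on generalizing E with
  | _ n ih =>
  rcases hn.eq_or_lt with rfl | hn
  · obtain rfl : E = ∅ := eq_empty_of_forall_notMem fun a ha => by
      have := hE.bounds a ha
      omega
    rw [Decodes, decode, dif_pos le_rfl]
    exact ⟨trivial, rfl, rfl⟩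
  by_cases h1 : ∃ j, (1, j) ∈ E
  · obtain ⟨j, h1j⟩ := h1
    have := (hE.bounds _ h1j).2.1
    obtain rfl | hj : j = 2 ∨ 2 < j := by omega
    · exact decodes_of_arc_one_two hE ih hn h1j
    by_cases h2 : ∃ k, (2, k) ∈ E
    · obtain ⟨k, h2k⟩ := h2
      exact decodes_of_arc_from_two hE ih h1j hj h2k
    · exact decodes_of_no_arc_from_two hE ih h1j hj (not_exists.1 h2)
  · exact decodes_of_no_arc_from_one hE ih hn (not_exists.1 h1)

def diagramEquivTree (n : ℕ) (hn : 1 ≤ n) :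
    {E : Arcs // IsNoncrossingDiagram n E} ≃ {t : PUB // t.size = n ∧ t.good} where
  toFun E := ⟨decode n E.1, (E.2.decodes hn).2.1, (E.2.decodes hn).1⟩
  invFun t := ⟨treeArcs t.1, (isNoncrossingDiagram_treeArcs t.1).of_le t.2.1.le⟩
  left_inv E := Subtype.ext (E.2.decodes hn).2.2
  right_inv := by
    rintro ⟨t, rfl, hg⟩
    exact Subtype.ext (decode_treeArcs hg)

end Noncrossing

theorem card_noncrossing_eq_card_trees (n : ℕ) (hn : 1 ≤ n) :
    Nat.card {p : Finpartition (Finset.Icc 1 n : Finset ℕ) // noncrossing p} =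
      Nat.card {t : PUB // t.size = n ∧ t.good} :=
  Nat.card_congr (Noncrossing.partitionEquivDiagram.trans (Noncrossing.diagramEquivTree n hn))
end
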